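/- arXiv:2203.00166 — 9 statements merged into one kernel-verified Lean document; each statement's English description precedes it below -/
import Mathlib

section
/- Let Y₁ ⊕ Y₂ be a direct sum of two Euclidean (inner-product) spaces, equipped with a norm ‖·‖ whose restrictions to Y₁ and Y₂ are the Euclidean norms, and suppose the norm is ε-invariant for some ε ∈ [0,1), i.e. (1−ε)‖y₁+y₂‖ ≤ ‖O₁y₁+O₂y₂‖ ≤ (1+ε)‖y₁+y₂‖ for all orthogonal operators O₁ on Y₁ and O₂ on Y₂. Define |||y₁+y₂||| = sup over orthogonal O₁, O₂ of ‖O₁y₁+O₂y₂‖. Then |||·||| is a norm on Y₁ ⊕ Y₂ satisfying ‖y₁+y₂‖ ≤ |||y₁+y₂||| ≤ (1+ε)‖y₁+y₂‖, it is invariant under all orthogonal operators on each summand, and it coincides with ‖·‖ on Y₁ and on Y₂. -/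
/-!
For a representation `ρ` of a group `G` and a seminorm `q` whose orbits are uniformly bounded,
`q (ρ g x) ≤ C * q x`, the pointwise supremum `x ↦ ⨆ g, q (ρ g x)` is again a seminorm. It lies
between `q` (take `g = 1`) and `C • q`, it is `ρ`-invariant because right translation by `g`
permutes `G`, and it equals `q` at every point where `q` is already constant on the orbit.
The theorem is the case of the orthogonal groups of `Y₁` and `Y₂` acting on `Y₁ × Y₂`, with
`C = 1 + ε`.
-/

open Set

namespace Seminorm

variable {𝕜 G E : Type*} [NormedField 𝕜] [Group G] [AddCommGroup E] [Module 𝕜 E]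
  {q : Seminorm 𝕜 E} {ρ : Representation 𝕜 G E} {C : ℝ}

variable (q ρ) in
/-- Only meaningful when the family `q.comp (ρ g)` is bounded above; otherwise the supremum in the
lattice of seminorms is a junk value. -/
noncomputable def orbitSup : Seminorm 𝕜 E := ⨆ g, q.comp (ρ g)

theorem orbitSup_apply (hC : ∀ g x, q (ρ g x) ≤ C * q x) (x : E) :
    q.orbitSup ρ x = ⨆ g, q (ρ g x) :=
  Seminorm.iSup_apply <| Seminorm.bddAbove_range_iff.2 fun x ↦
    ⟨C * q x, forall_mem_range.2 fun g ↦ hC g x⟩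

theorem le_orbitSup (hC : ∀ g x, q (ρ g x) ≤ C * q x) (g : G) (x : E) :
    q (ρ g x) ≤ q.orbitSup ρ x := by
  rw [orbitSup_apply hC]
  exact le_ciSup ⟨C * q x, forall_mem_range.2 fun g ↦ hC g x⟩ g

theorem orbitSup_le (hC : ∀ g x, q (ρ g x) ≤ C * q x) (x : E) :
    q.orbitSup ρ x ≤ C * q x := by
  rw [orbitSup_apply hC]
  exact ciSup_le fun g ↦ hC g x

theorem orbitSup_apply_representation (hC : ∀ g x, q (ρ g x) ≤ C * q x) (g : G) (x : E) :
    q.orbitSup ρ (ρ g x) = q.orbitSup ρ x := by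
  simp only [orbitSup_apply hC, ← Module.End.mul_apply, ← map_mul]
  exact (Equiv.mulRight g).iSup_comp (g := fun h ↦ q (ρ h x))

theorem orbitSup_eq_of_forall (hC : ∀ g x, q (ρ g x) ≤ C * q x) {x : E}
    (hx : ∀ g, q (ρ g x) = q x) : q.orbitSup ρ x = q x := by
  simp only [orbitSup_apply hC, hx, ciSup_const]

end Seminorm

namespace LinearIsometryEquiv

variable (R E F : Type*) [CommSemiring R] [SeminormedAddCommGroup E] [Module R E]
  [SeminormedAddCommGroup F] [Module R F]

def prodRepresentation : Representation R ((E ≃ₗᵢ[R] E) × (F ≃ₗᵢ[R] F)) (E × F) where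
  toFun g := (g.1 : E →ₗ[R] E).prodMap g.2
  map_one' := rfl
  map_mul' _ _ := rfl

@[simp]
theorem prodRepresentation_apply (g : (E ≃ₗᵢ[R] E) × (F ≃ₗᵢ[R] F)) (x : E × F) :
    prodRepresentation R E F g x = (g.1 x.1, g.2 x.2) :=
  rfl

end LinearIsometryEquiv

theorem stmt_0_general
    {Y₁ Y₂ : Type*}
    [NormedAddCommGroup Y₁] [InnerProductSpace ℝ Y₁]
    [NormedAddCommGroup Y₂] [InnerProductSpace ℝ Y₂]
    (N : Y₁ × Y₂ → ℝ)
    (hN_add : ∀ p q, N (p + q) ≤ N p + N q)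
    (hN_smul : ∀ (t : ℝ) p, N (t • p) = |t| * N p)
    (hN_def : ∀ p, N p = 0 → p = 0)
    (hN_res1 : ∀ y₁ : Y₁, N (y₁, 0) = ‖y₁‖)
    (hN_res2 : ∀ y₂ : Y₂, N (0, y₂) = ‖y₂‖)
    (ε : ℝ)
    (hinv : ∀ (O₁ : Y₁ ≃ₗᵢ[ℝ] Y₁) (O₂ : Y₂ ≃ₗᵢ[ℝ] Y₂) (y₁ : Y₁) (y₂ : Y₂),
      (1 - ε) * N (y₁, y₂) ≤ N (O₁ y₁, O₂ y₂) ∧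
      N (O₁ y₁, O₂ y₂) ≤ (1 + ε) * N (y₁, y₂)) :
    let T : Y₁ × Y₂ → ℝ := fun p =>
      sSup {r | ∃ (O₁ : Y₁ ≃ₗᵢ[ℝ] Y₁) (O₂ : Y₂ ≃ₗᵢ[ℝ] Y₂), r = N (O₁ p.1, O₂ p.2)}
    (∀ p q, T (p + q) ≤ T p + T q) ∧
    (∀ (t : ℝ) p, T (t • p) = |t| * T p) ∧
    (∀ p, T p = 0 → p = 0) ∧
    (∀ p, N p ≤ T p ∧ T p ≤ (1 + ε) * N p) ∧
    (∀ (V₁ : Y₁ ≃ₗᵢ[ℝ] Y₁) (V₂ : Y₂ ≃ₗᵢ[ℝ] Y₂) (y₁ : Y₁) (y₂ : Y₂),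
      T (V₁ y₁, V₂ y₂) = T (y₁, y₂)) ∧
    (∀ y₁ : Y₁, T (y₁, 0) = ‖y₁‖) ∧
    (∀ y₂ : Y₂, T (0, y₂) = ‖y₂‖) := by
  intro T
  set q : Seminorm ℝ (Y₁ × Y₂) := Seminorm.of N hN_add fun t p ↦ hN_smul t p
  set ρ := LinearIsometryEquiv.prodRepresentation ℝ Y₁ Y₂
  have hq : ∀ p, q p = N p := fun _ ↦ rfl
  have hC : ∀ g p, q (ρ g p) ≤ (1 + ε) * q p := fun g p ↦ (hinv g.1 g.2 p.1 p.2).2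
  have hT : ∀ p, T p = q.orbitSup ρ p := fun p ↦ by
    rw [Seminorm.orbitSup_apply hC]
    exact congrArg sSup <| Set.ext fun _ ↦
      ⟨fun ⟨O₁, O₂, h⟩ ↦ ⟨(O₁, O₂), h.symm⟩, fun ⟨g, h⟩ ↦ ⟨g.1, g.2, h.symm⟩⟩
  have hN_le_T : ∀ p, N p ≤ T p := fun p ↦ by
    rw [hT]; exact Seminorm.le_orbitSup hC 1 p
  refine ⟨fun p p' ↦ ?_, fun t p ↦ ?_, fun p hp ↦ ?_, fun p ↦ ⟨hN_le_T p, ?_⟩,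
    fun V₁ V₂ y₁ y₂ ↦ ?_, fun y₁ ↦ ?_, fun y₂ ↦ ?_⟩
  · simpa only [hT] using map_add_le_add (q.orbitSup ρ) p p'
  · simpa only [hT, Real.norm_eq_abs] using map_smul_eq_mul (q.orbitSup ρ) t p
  · exact hN_def p <| le_antisymm (hp ▸ hN_le_T p) (apply_nonneg q p)
  · rw [hT]; exact Seminorm.orbitSup_le hC p
  · rw [hT, hT]; exact Seminorm.orbitSup_apply_representation hC (V₁, V₂) (y₁, y₂)
  · rw [hT, Seminorm.orbitSup_eq_of_forall hC fun g ↦ ?_] <;> simp [hq, ρ, hN_res1]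
  · rw [hT, Seminorm.orbitSup_eq_of_forall hC fun g ↦ ?_] <;> simp [hq, ρ, hN_res2]

/-- Lemma `L:InvNorm`: the sup over orthogonal operators of an ε-invariant norm on a
direct sum of two Euclidean spaces is a norm, (1+ε)-equivalent to the original,
invariant under orthogonal operators on each summand, and coincides with the
original norm on each summand. -/
theorem stmt_0
    {Y₁ Y₂ : Type*}
    [NormedAddCommGroup Y₁] [InnerProductSpace ℝ Y₁] [FiniteDimensional ℝ Y₁]
    [NormedAddCommGroup Y₂] [InnerProductSpace ℝ Y₂] [FiniteDimensional ℝ Y₂]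
    (N : Y₁ × Y₂ → ℝ)
    (hN_add : ∀ p q, N (p + q) ≤ N p + N q)
    (hN_smul : ∀ (t : ℝ) p, N (t • p) = |t| * N p)
    (hN_def : ∀ p, N p = 0 → p = 0)
    (hN_res1 : ∀ y₁ : Y₁, N (y₁, 0) = ‖y₁‖)
    (hN_res2 : ∀ y₂ : Y₂, N (0, y₂) = ‖y₂‖)
    (ε : ℝ) (hε0 : 0 ≤ ε) (hε1 : ε < 1)
    (hinv : ∀ (O₁ : Y₁ ≃ₗᵢ[ℝ] Y₁) (O₂ : Y₂ ≃ₗᵢ[ℝ] Y₂) (y₁ : Y₁) (y₂ : Y₂),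
      (1 - ε) * N (y₁, y₂) ≤ N (O₁ y₁, O₂ y₂) ∧
      N (O₁ y₁, O₂ y₂) ≤ (1 + ε) * N (y₁, y₂)) :
    let T : Y₁ × Y₂ → ℝ := fun p =>
      sSup {r | ∃ (O₁ : Y₁ ≃ₗᵢ[ℝ] Y₁) (O₂ : Y₂ ≃ₗᵢ[ℝ] Y₂), r = N (O₁ p.1, O₂ p.2)}
    (∀ p q, T (p + q) ≤ T p + T q) ∧
    (∀ (t : ℝ) p, T (t • p) = |t| * T p) ∧
    (∀ p, T p = 0 → p = 0) ∧
    (∀ p, N p ≤ T p ∧ T p ≤ (1 + ε) * N p) ∧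
    (∀ (V₁ : Y₁ ≃ₗᵢ[ℝ] Y₁) (V₂ : Y₂ ≃ₗᵢ[ℝ] Y₂) (y₁ : Y₁) (y₂ : Y₂),
      T (V₁ y₁, V₂ y₂) = T (y₁, y₂)) ∧
    (∀ y₁ : Y₁, T (y₁, 0) = ‖y₁‖) ∧
    (∀ y₂ : Y₂, T (0, y₂) = ‖y₂‖) :=
  stmt_0_general N hN_add hN_smul hN_def hN_res1 hN_res2 ε hinv
end

section
/- If a norm on a direct sum Y = Y₁ ⊕ Y₂ of two Euclidean spaces satisfies ‖O₁y₁ + O₂y₂‖ = ‖y₁ + y₂‖ for all y₁ ∈ Y₁, y₂ ∈ Y₂ and all orthogonal operators O₁ on Y₁ and O₂ on Y₂, then there exists a 1-unconditional norm ‖·‖_Z on ℝ² such that ‖y₁ + y₂‖ = ‖(‖y₁‖, ‖y₂‖)‖_Z for all y₁ ∈ Y₁ and y₂ ∈ Y₂. -/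
/-! A vector of `Yᵢ` is carried to any other vector of the same length by an orthogonal map
(a reflection), so invariance forces `N (y₁, y₂)` to depend only on `‖y₁‖` and `‖y₂‖`.
Fixing unit vectors `e₁, e₂`, the norm `nZ (a, b) := N (a • e₁, b • e₂)` is the pullback of `N`
along an injective linear map, and it is unconditional because `-a • e₁` and `a • e₁` have the
same length. -/

theorem exists_linearIsometryEquiv_apply_eq {Y : Type*} [NormedAddCommGroup Y]
    [InnerProductSpace ℝ Y] {u v : Y} (h : ‖u‖ = ‖v‖) :
    ∃ O : Y ≃ₗᵢ[ℝ] Y, O u = v :=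
  ⟨Submodule.reflection (ℝ ∙ (u - v))ᗮ, Submodule.reflection_sub h⟩

theorem eq_of_norm_eq_of_invariant {Y₁ Y₂ : Type*}
    [NormedAddCommGroup Y₁] [InnerProductSpace ℝ Y₁]
    [NormedAddCommGroup Y₂] [InnerProductSpace ℝ Y₂] {N : Y₁ × Y₂ → ℝ}
    (hinv : ∀ (O₁ : Y₁ ≃ₗᵢ[ℝ] Y₁) (O₂ : Y₂ ≃ₗᵢ[ℝ] Y₂) (y₁ : Y₁) (y₂ : Y₂),
      N (O₁ y₁, O₂ y₂) = N (y₁, y₂))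
    {y₁ z₁ : Y₁} {y₂ z₂ : Y₂} (h₁ : ‖y₁‖ = ‖z₁‖) (h₂ : ‖y₂‖ = ‖z₂‖) :
    N (y₁, y₂) = N (z₁, z₂) := by
  obtain ⟨O₁, rfl⟩ := exists_linearIsometryEquiv_apply_eq h₁
  obtain ⟨O₂, rfl⟩ := exists_linearIsometryEquiv_apply_eq h₂
  exact (hinv O₁ O₂ y₁ y₂).symm

theorem stmt_1_general
    {Y₁ Y₂ : Type*}
    [NormedAddCommGroup Y₁] [InnerProductSpace ℝ Y₁]
    [NormedAddCommGroup Y₂] [InnerProductSpace ℝ Y₂]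
    (hd1 : 0 < Module.finrank ℝ Y₁) (hd2 : 0 < Module.finrank ℝ Y₂)
    (N : Y₁ × Y₂ → ℝ)
    (hN_add : ∀ p q, N (p + q) ≤ N p + N q)
    (hN_smul : ∀ (t : ℝ) p, N (t • p) = |t| * N p)
    (hN_def : ∀ p, N p = 0 → p = 0)
    (hinv : ∀ (O₁ : Y₁ ≃ₗᵢ[ℝ] Y₁) (O₂ : Y₂ ≃ₗᵢ[ℝ] Y₂) (y₁ : Y₁) (y₂ : Y₂),
      N (O₁ y₁, O₂ y₂) = N (y₁, y₂)) :
    ∃ nZ : ℝ × ℝ → ℝ,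
      (∀ p q : ℝ × ℝ, nZ (p + q) ≤ nZ p + nZ q) ∧
      (∀ (t : ℝ) (p : ℝ × ℝ), nZ (t • p) = |t| * nZ p) ∧
      (∀ p : ℝ × ℝ, nZ p = 0 → p = 0) ∧
      (∀ a b : ℝ, nZ (-a, b) = nZ (a, b) ∧ nZ (a, -b) = nZ (a, b)) ∧
      (∀ (y₁ : Y₁) (y₂ : Y₂), N (y₁, y₂) = nZ (‖y₁‖, ‖y₂‖)) := by
  have := Module.nontrivial_of_finrank_pos hd1
  have := Module.nontrivial_of_finrank_pos hd2
  obtain ⟨e₁, he₁⟩ := exists_norm_eq Y₁ zero_le_one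
  obtain ⟨e₂, he₂⟩ := exists_norm_eq Y₂ zero_le_one
  have norm_smul_e₁ (a : ℝ) : ‖a • e₁‖ = |a| := by rw [norm_smul, he₁, mul_one, Real.norm_eq_abs]
  have norm_smul_e₂ (b : ℝ) : ‖b • e₂‖ = |b| := by rw [norm_smul, he₂, mul_one, Real.norm_eq_abs]
  refine ⟨fun p => N (p.1 • e₁, p.2 • e₂), fun p q => ?_, fun t p => ?_, fun p hp => ?_,
    fun a b => ?_, fun y₁ y₂ => ?_⟩
  · simpa only [Prod.fst_add, Prod.snd_add, add_smul, Prod.mk_add_mk] using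
      hN_add (p.1 • e₁, p.2 • e₂) (q.1 • e₁, q.2 • e₂)
  · simpa only [Prod.smul_fst, Prod.smul_snd, smul_eq_mul, mul_smul, Prod.smul_mk] using
      hN_smul t (p.1 • e₁, p.2 • e₂)
  · have h := hN_def _ hp
    simp only [Prod.mk_eq_zero, smul_eq_zero, ← norm_eq_zero (a := e₁), ← norm_eq_zero (a := e₂),
      he₁, he₂, one_ne_zero, or_false] at h
    exact Prod.ext h.1 h.2
  · constructor <;> apply eq_of_norm_eq_of_invariant hinv <;>
      simp only [norm_smul_e₁, norm_smul_e₂, abs_neg]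
  · exact eq_of_norm_eq_of_invariant hinv (by rw [norm_smul_e₁, abs_norm])
      (by rw [norm_smul_e₂, abs_norm])

/-- Lemma `L:InvToUncond`: a norm on a direct sum of two Euclidean spaces which is
invariant under orthogonal operators on each summand is given by a 1-unconditional
norm on ℝ² applied to the pair of Euclidean norms. -/
theorem stmt_1
    {Y₁ Y₂ : Type*}
    [NormedAddCommGroup Y₁] [InnerProductSpace ℝ Y₁] [FiniteDimensional ℝ Y₁]
    [NormedAddCommGroup Y₂] [InnerProductSpace ℝ Y₂] [FiniteDimensional ℝ Y₂]
    (hd1 : 0 < Module.finrank ℝ Y₁) (hd2 : 0 < Module.finrank ℝ Y₂)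
    (N : Y₁ × Y₂ → ℝ)
    (hN_add : ∀ p q, N (p + q) ≤ N p + N q)
    (hN_smul : ∀ (t : ℝ) p, N (t • p) = |t| * N p)
    (hN_def : ∀ p, N p = 0 → p = 0)
    (hinv : ∀ (O₁ : Y₁ ≃ₗᵢ[ℝ] Y₁) (O₂ : Y₂ ≃ₗᵢ[ℝ] Y₂) (y₁ : Y₁) (y₂ : Y₂),
      N (O₁ y₁, O₂ y₂) = N (y₁, y₂)) :
    ∃ nZ : ℝ × ℝ → ℝ,
      (∀ p q : ℝ × ℝ, nZ (p + q) ≤ nZ p + nZ q) ∧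
      (∀ (t : ℝ) (p : ℝ × ℝ), nZ (t • p) = |t| * nZ p) ∧
      (∀ p : ℝ × ℝ, nZ p = 0 → p = 0) ∧
      (∀ a b : ℝ, nZ (-a, b) = nZ (a, b) ∧ nZ (a, -b) = nZ (a, b)) ∧
      (∀ (y₁ : Y₁) (y₂ : Y₂), N (y₁, y₂) = nZ (‖y₁‖, ‖y₂‖)) :=
  stmt_1_general hd1 hd2 N hN_add hN_smul hN_def hinv
end

section
/- Let Z = (ℝ², ‖·‖_Z) have a normalized 1-unconditional basis (1,0), (0,1), and for τ ∈ [0, π/2] let u(τ) = (cos τ, sin τ)/‖(cos τ, sin τ)‖_Z. Then for all 0 ≤ τ₁ < τ₂ ≤ π/2, ‖u(τ₂) − u(τ₁)‖_Z ≤ (2 M_Z / m_Z)(τ₂ − τ₁), where m_Z = min_τ ‖(cos τ, sin τ)‖_Z and M_Z = max_τ ‖(cos τ, sin τ)‖_Z. In particular ‖u(τ₂) − u(τ₁)‖_Z ≤ 4(τ₂ − τ₁). -/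
/-!
Write `c τ = (cos τ, sin τ)`. Then
`u τ₂ - u τ₁ = ‖c τ₂‖⁻¹ • (c τ₂ - c τ₁) + (‖c τ₂‖⁻¹ - ‖c τ₁‖⁻¹) • c τ₁`, and by the reverse
triangle inequality each term has norm at most `‖c τ₂ - c τ₁‖ / ‖c τ₂‖ ≤ ‖c τ₂ - c τ₁‖ / m_Z`.
The chord `c τ₂ - c τ₁` is `2 sin ((τ₂ - τ₁) / 2)` times a point of the unit circle, so its norm
is at most `M_Z (τ₂ - τ₁)`. Unconditionality gives `|a|, |b| ≤ ‖(a, b)‖ ≤ |a| + |b|`, whence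
`√2 / 2 ≤ m_Z ≤ M_Z ≤ √2` and `2 M_Z / m_Z ≤ 4`.
-/

open Real

theorem sqrt_two_div_two_le_of_abs_le {x y r : ℝ} (hxy : x ^ 2 + y ^ 2 = 1) (hx : |x| ≤ r)
    (hy : |y| ≤ r) : √2 / 2 ≤ r := by
  have h2 : √2 ^ 2 = 2 := sq_sqrt zero_le_two
  have hr : 0 ≤ r := (abs_nonneg x).trans hx
  nlinarith [sq_abs x, sq_abs y, abs_nonneg x, abs_nonneg y, sq_nonneg (2 * r - √2), sqrt_nonneg 2]

theorem abs_add_abs_le_sqrt_two {x y : ℝ} (hxy : x ^ 2 + y ^ 2 = 1) : |x| + |y| ≤ √2 := by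
  rw [le_sqrt (by positivity) zero_le_two]
  nlinarith [sq_abs x, sq_abs y, sq_nonneg (|x| - |y|)]

namespace Seminorm

section Module

variable {E : Type*} [AddCommGroup E] [Module ℝ E] (p : Seminorm ℝ E)

theorem map_inv_smul_sub_inv_smul_le {x y : E} (hx : 0 < p x) (hy : 0 < p y) :
    p ((p x)⁻¹ • x - (p y)⁻¹ • y) ≤ 2 * p (x - y) / p x := by
  have hsplit : (p x)⁻¹ • x - (p y)⁻¹ • y = (p x)⁻¹ • (x - y) + ((p x)⁻¹ - (p y)⁻¹) • y := by
    module
  have hcoeff : |(p x)⁻¹ - (p y)⁻¹| * p y = |p y - p x| / p x := by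
    rw [inv_sub_inv hx.ne' hy.ne', abs_div, abs_of_pos (mul_pos hx hy)]
    field_simp
  calc p ((p x)⁻¹ • x - (p y)⁻¹ • y)
      ≤ |(p x)⁻¹| * p (x - y) + |(p x)⁻¹ - (p y)⁻¹| * p y := by
        rw [hsplit, ← Real.norm_eq_abs, ← Real.norm_eq_abs, ← map_smul_eq_mul, ← map_smul_eq_mul]
        exact map_add_le_add p _ _
    _ ≤ p (x - y) / p x + p (x - y) / p x := by
        rw [abs_of_pos (inv_pos.mpr hx), hcoeff, inv_mul_eq_div, abs_sub_comm]
        gcongr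
        exact abs_sub_map_le_sub p x y
    _ = 2 * p (x - y) / p x := by ring

end Module

variable (p : Seminorm ℝ (ℝ × ℝ))

theorem map_prod_mk_le_abs_add_abs (h10 : p (1, 0) = 1) (h01 : p (0, 1) = 1) (a b : ℝ) :
    p (a, b) ≤ |a| + |b| := by
  calc p (a, b) = p (a • (1, 0) + b • (0, 1)) := by simp
    _ ≤ |a| + |b| := by
      grw [map_add_le_add, map_smul_eq_mul, map_smul_eq_mul, h10, h01]
      simp

theorem abs_le_map_prod_mk_fst (h10 : p (1, 0) = 1) (hsymm : ∀ a b : ℝ, p (a, -b) = p (a, b))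
    (a b : ℝ) : |a| ≤ p (a, b) := by
  have h : p ((2 * a) • ((1 : ℝ), (0 : ℝ))) ≤ p (a, b) + p (a, -b) := by
    calc p ((2 * a) • ((1 : ℝ), (0 : ℝ))) = p ((a, b) + (a, -b)) := by
          congr 1; ext <;> simp; ring
      _ ≤ p (a, b) + p (a, -b) := map_add_le_add p _ _
  rw [map_smul_eq_mul, h10, hsymm, norm_mul, Real.norm_two, Real.norm_eq_abs] at h
  linarith

theorem abs_le_map_prod_mk_snd (h01 : p (0, 1) = 1) (hsymm : ∀ a b : ℝ, p (-a, b) = p (a, b))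
    (a b : ℝ) : |b| ≤ p (a, b) := by
  have h : p ((2 * b) • ((0 : ℝ), (1 : ℝ))) ≤ p (a, b) + p (-a, b) := by
    calc p ((2 * b) • ((0 : ℝ), (1 : ℝ))) = p ((a, b) + (-a, b)) := by
          congr 1; ext <;> simp; ring
      _ ≤ p (a, b) + p (-a, b) := map_add_le_add p _ _
  rw [map_smul_eq_mul, h01, hsymm, norm_mul, Real.norm_two, Real.norm_eq_abs] at h
  linarith

theorem sqrt_two_div_two_le_map_cos_sin (h10 : p (1, 0) = 1) (h01 : p (0, 1) = 1)
    (hsymm : ∀ a b : ℝ, p (-a, b) = p (a, b) ∧ p (a, -b) = p (a, b)) (τ : ℝ) :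
    √2 / 2 ≤ p (cos τ, sin τ) :=
  sqrt_two_div_two_le_of_abs_le (cos_sq_add_sin_sq τ)
    (p.abs_le_map_prod_mk_fst h10 (fun a b => (hsymm a b).2) _ _)
    (p.abs_le_map_prod_mk_snd h01 (fun a b => (hsymm a b).1) _ _)

theorem map_cos_sin_le_sqrt_two (h10 : p (1, 0) = 1) (h01 : p (0, 1) = 1) (τ : ℝ) :
    p (cos τ, sin τ) ≤ √2 :=
  (p.map_prod_mk_le_abs_add_abs h10 h01 _ _).trans (abs_add_abs_le_sqrt_two (cos_sq_add_sin_sq τ))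

theorem map_cos_sin_sub_le {M : ℝ} (hM : ∀ τ, p (cos τ, sin τ) ≤ M) (τ₁ τ₂ : ℝ) :
    p ((cos τ₂, sin τ₂) - (cos τ₁, sin τ₁)) ≤ M * |τ₂ - τ₁| := by
  set θ := (τ₂ + τ₁) / 2 + π / 2
  have hchord : (cos τ₂, sin τ₂) - (cos τ₁, sin τ₁) =
      (2 * sin ((τ₂ - τ₁) / 2)) • (cos θ, sin θ) := by
    ext
    · simp [θ, cos_sub_cos, cos_add_pi_div_two]; ring
    · simp [θ, sin_sub_sin, sin_add_pi_div_two]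
  have hsin : |2 * sin ((τ₂ - τ₁) / 2)| ≤ |τ₂ - τ₁| := by
    have := abs_sin_le_abs (x := (τ₂ - τ₁) / 2)
    rw [abs_div, abs_two] at this
    rw [abs_mul, abs_two]
    linarith
  have hM_nonneg : 0 ≤ M := (apply_nonneg p _).trans (hM 0)
  rw [hchord, map_smul_eq_mul, Real.norm_eq_abs, mul_comm]
  gcongr
  exact hM θ

theorem map_normalized_cos_sin_sub_le {m M : ℝ} (hm : 0 < m) (hmp : ∀ τ, m ≤ p (cos τ, sin τ))
    (hMp : ∀ τ, p (cos τ, sin τ) ≤ M) (τ₁ τ₂ : ℝ) :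
    p ((p (cos τ₂, sin τ₂))⁻¹ • (cos τ₂, sin τ₂) - (p (cos τ₁, sin τ₁))⁻¹ • (cos τ₁, sin τ₁)) ≤
      2 * M / m * |τ₂ - τ₁| := by
  have hM_nonneg : 0 ≤ M := hm.le.trans ((hmp 0).trans (hMp 0))
  calc _ ≤ 2 * p ((cos τ₂, sin τ₂) - (cos τ₁, sin τ₁)) / p (cos τ₂, sin τ₂) :=
        map_inv_smul_sub_inv_smul_le p (hm.trans_le (hmp τ₂)) (hm.trans_le (hmp τ₁))
    _ ≤ 2 * (M * |τ₂ - τ₁|) / m := by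
        gcongr
        exacts [map_cos_sin_sub_le p hMp τ₁ τ₂, hmp τ₂]
    _ = 2 * M / m * |τ₂ - τ₁| := by ring

end Seminorm

theorem stmt_3_general
    (nZ : ℝ × ℝ → ℝ)
    (hN_add : ∀ p q, nZ (p + q) ≤ nZ p + nZ q)
    (hN_smul : ∀ (t : ℝ) p, nZ (t • p) = |t| * nZ p)
    (h10 : nZ (1, 0) = 1) (h01 : nZ (0, 1) = 1)
    (huncond : ∀ a b : ℝ, nZ (-a, b) = nZ (a, b) ∧ nZ (a, -b) = nZ (a, b)) :
    let u : ℝ → ℝ × ℝ := fun τ =>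
      (Real.cos τ / nZ (Real.cos τ, Real.sin τ),
       Real.sin τ / nZ (Real.cos τ, Real.sin τ))
    let mZ : ℝ := sInf {r | ∃ τ : ℝ, r = nZ (Real.cos τ, Real.sin τ)}
    let MZ : ℝ := sSup {r | ∃ τ : ℝ, r = nZ (Real.cos τ, Real.sin τ)}
    ∀ τ₁ τ₂ : ℝ, 0 ≤ τ₁ → τ₁ < τ₂ → τ₂ ≤ π / 2 →
      nZ (u τ₂ - u τ₁) ≤ (2 * MZ / mZ) * (τ₂ - τ₁) ∧
      nZ (u τ₂ - u τ₁) ≤ 4 * (τ₂ - τ₁) := by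
  intro u mZ MZ τ₁ τ₂ _ hlt _
  let p : Seminorm ℝ (ℝ × ℝ) := .of nZ hN_add fun t x => by rw [hN_smul, Real.norm_eq_abs]
  have hp (x : ℝ × ℝ) : p x = nZ x := rfl
  have hmem (τ : ℝ) : p (cos τ, sin τ) ∈ {r | ∃ τ : ℝ, r = nZ (cos τ, sin τ)} := ⟨τ, rfl⟩
  have hlowerBound : √2 / 2 ∈ lowerBounds {r | ∃ τ : ℝ, r = nZ (cos τ, sin τ)} := by
    rintro _ ⟨τ, rfl⟩
    exact p.sqrt_two_div_two_le_map_cos_sin h10 h01 huncond τ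
  have hupperBound : √2 ∈ upperBounds {r | ∃ τ : ℝ, r = nZ (cos τ, sin τ)} := by
    rintro _ ⟨τ, rfl⟩
    exact p.map_cos_sin_le_sqrt_two h10 h01 τ
  have hmZ : √2 / 2 ≤ mZ := le_csInf ⟨_, hmem 0⟩ hlowerBound
  have hMZ : MZ ≤ √2 := csSup_le ⟨_, hmem 0⟩ hupperBound
  have hmZ_pos : 0 < mZ := lt_of_lt_of_le (by positivity) hmZ
  have hu (τ : ℝ) : u τ = (p (cos τ, sin τ))⁻¹ • (cos τ, sin τ) := by
    ext <;> simp [u, hp, div_eq_inv_mul]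
  have hlip : nZ (u τ₂ - u τ₁) ≤ 2 * MZ / mZ * (τ₂ - τ₁) := by
    rw [hu, hu, ← abs_of_pos (sub_pos.2 hlt)]
    exact p.map_normalized_cos_sin_sub_le hmZ_pos
      (fun τ => csInf_le ⟨_, hlowerBound⟩ (hmem τ)) (fun τ => le_csSup ⟨_, hupperBound⟩ (hmem τ))
      τ₁ τ₂
  refine ⟨hlip, hlip.trans ?_⟩
  have hratio : 2 * MZ / mZ ≤ 4 := by
    rw [div_le_iff₀ hmZ_pos]
    linarith
  gcongr

/-- The Lipschitz estimate of Proposition `P:diff`: the normalized curve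
u(τ) = (cos τ, sin τ)/‖(cos τ, sin τ)‖_Z is (2M_Z/m_Z)-Lipschitz on [0, π/2];
in particular 4-Lipschitz. -/
theorem stmt_3
    (nZ : ℝ × ℝ → ℝ)
    (hN_add : ∀ p q, nZ (p + q) ≤ nZ p + nZ q)
    (hN_smul : ∀ (t : ℝ) p, nZ (t • p) = |t| * nZ p)
    (hN_def : ∀ p, nZ p = 0 → p = 0)
    (h10 : nZ (1, 0) = 1) (h01 : nZ (0, 1) = 1)
    (huncond : ∀ a b : ℝ, nZ (-a, b) = nZ (a, b) ∧ nZ (a, -b) = nZ (a, b)) :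
    let u : ℝ → ℝ × ℝ := fun τ =>
      (Real.cos τ / nZ (Real.cos τ, Real.sin τ),
       Real.sin τ / nZ (Real.cos τ, Real.sin τ))
    let mZ : ℝ := sInf {r | ∃ τ : ℝ, r = nZ (Real.cos τ, Real.sin τ)}
    let MZ : ℝ := sSup {r | ∃ τ : ℝ, r = nZ (Real.cos τ, Real.sin τ)}
    ∀ τ₁ τ₂ : ℝ, 0 ≤ τ₁ → τ₁ < τ₂ → τ₂ ≤ π / 2 →
      nZ (u τ₂ - u τ₁) ≤ (2 * MZ / mZ) * (τ₂ - τ₁) ∧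
      nZ (u τ₂ - u τ₁) ≤ 4 * (τ₂ - τ₁) :=
  stmt_3_general nZ hN_add hN_smul h10 h01 huncond
end

section
/- Let 0 < δ < 1/4 with k := 1/δ ∈ ℕ. Let A ⊂ ℝ² be a closed convex domain symmetric about both coordinate axes containing (±1,0) and (0,±1) on its boundary. Let rᵢ (1 ≤ i ≤ k) denote the x-coordinate of the boundary point of A in the first quadrant on the line y = 1 − iδ, and Lᵢ = rᵢ − r_{i−1} (with L₀ = r₀, the largest x-coordinate of A ∩ {y=1}). Then convexity of A implies L₁ ≥ L₂ ≥ ⋯ ≥ L_k, and for all i with δ^{−1/2} + 1 ≤ i ≤ k − 1 the inequalities (1+ω(δ))r_{i−1} ≥ r_{i−1} + 2δrᵢ + (Lᵢ − L_{i+1}) and (1+ω(δ))rᵢ ≥ rᵢ + 2δr_{i−1} + (L_{i−1} − Lᵢ) hold, where ω(δ) = 4δ + δ^{1/2}. -/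
/-!
The right end `sliceSup A y` of the slice of `A` at height `y` is concave in `y` by convexity of
`A`, and nonincreasing for `y ≥ 0` by the symmetry in the `x`-axis. So `t ↦ sliceSup A (1 - tδ)`
is concave, nondecreasing and nonnegative on `[0, k]`: its unit increments `Lᵢ` decrease, and the
increments on either side of `j` are at most the average increment `r_j / j ≤ √δ r_j` once
`j ≥ δ^{-1/2}`. Both inequalities are then linear consequences, with `2δ r_{j+1} ≤ 4δ r_j`.
-/

open Set

noncomputable def sliceSup (A : Set (ℝ × ℝ)) (y : ℝ) : ℝ := sSup {x | (x, y) ∈ A}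

theorem one_sub_mul_mem_Icc {δ n t : ℝ} (hδ : 0 ≤ δ) (hn : n * δ ≤ 1) (ht : t ∈ Icc 0 n) :
    1 - t * δ ∈ Icc (0 : ℝ) 1 :=
  ⟨by nlinarith [ht.2], by nlinarith [ht.1]⟩

section Slices

variable {A : Set (ℝ × ℝ)}

theorem IsCompact.bddAbove_slice (hA : IsCompact A) (y : ℝ) : BddAbove {x | (x, y) ∈ A} :=
  (hA.image continuous_fst).bddAbove.mono fun _ hx => mem_image_of_mem Prod.fst hx

theorem IsCompact.le_sliceSup (hA : IsCompact A) {x y : ℝ} (h : (x, y) ∈ A) :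
    x ≤ sliceSup A y :=
  le_csSup (hA.bddAbove_slice y) h

theorem IsCompact.sliceSup_mem (hA : IsCompact A) {y : ℝ} (hy : y ∈ Prod.snd '' A) :
    (sliceSup A y, y) ∈ A := by
  obtain ⟨⟨x, y⟩, hxy, rfl⟩ := hy
  exact (hA.isClosed.preimage (continuous_id.prodMk continuous_const)).csSup_mem
    ⟨x, hxy⟩ (hA.bddAbove_slice y)

theorem concaveOn_sliceSup (hA : IsCompact A) (hconv : Convex ℝ A) :
    ConcaveOn ℝ (Prod.snd '' A) (sliceSup A) := by
  refine ⟨hconv.linear_image (LinearMap.snd ℝ ℝ ℝ), fun y₁ hy₁ y₂ hy₂ a b ha hb hab => ?_⟩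
  have hmem := hconv (hA.sliceSup_mem hy₁) (hA.sliceSup_mem hy₂) ha hb hab
  exact hA.le_sliceSup hmem

/-- The vertical line through the right end of a slice meets `A` in a segment symmetric about
the `x`-axis, so every lower slice reaches at least as far. -/
theorem antitoneOn_sliceSup (hA : IsCompact A) (hconv : Convex ℝ A)
    (hsymm : ∀ p ∈ A, (p.1, -p.2) ∈ A) :
    AntitoneOn (sliceSup A) (Ici 0 ∩ Prod.snd '' A) := by
  rintro b ⟨hb, -⟩ a ⟨-, ha⟩ hba
  have hvert : Convex ℝ {y | (sliceSup A a, y) ∈ A} := by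
    intro y₁ hy₁ y₂ hy₂ s t hs ht hst
    have := hconv hy₁ hy₂ hs ht hst
    rwa [Prod.smul_mk, Prod.smul_mk, Prod.mk_add_mk, Convex.combo_self hst] at this
  have hup := hA.sliceSup_mem ha
  have hb' : (sliceSup A a, b) ∈ A :=
    hvert.ordConnected.out (by simpa using hsymm _ hup) hup
      ⟨by linarith [mem_Ici.mp hb], hba⟩
  exact hA.le_sliceSup hb'

theorem Icc_subset_image_snd (hconv : Convex ℝ A) (hsymm : ∀ p ∈ A, (p.1, -p.2) ∈ A)
    (h01 : ((0 : ℝ), (1 : ℝ)) ∈ A) : Icc (-1) 1 ⊆ Prod.snd '' A :=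
  (hconv.linear_image (LinearMap.snd ℝ ℝ ℝ)).ordConnected.out ⟨_, hsymm _ h01, rfl⟩ ⟨_, h01, rfl⟩

variable {δ n : ℝ} (hA : IsCompact A) (hconv : Convex ℝ A) (hIcc : Icc 0 1 ⊆ Prod.snd '' A)
  (hδ : 0 ≤ δ) (hn : n * δ ≤ 1)
include hA hconv hIcc hδ hn

theorem concaveOn_sliceSup_one_sub_mul :
    ConcaveOn ℝ (Icc 0 n) fun t => sliceSup A (1 - t * δ) := by
  have hline : ∀ t : ℝ, AffineMap.lineMap (k := ℝ) 1 (1 - δ) t = 1 - t * δ := fun t => by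
    rw [AffineMap.lineMap_apply_ring']; ring
  refine (((concaveOn_sliceSup hA hconv).comp_affineMap
    (AffineMap.lineMap (k := ℝ) 1 (1 - δ))).subset (fun t ht => ?_) (convex_Icc 0 n)).congr
    fun t _ => by simp [hline]
  simpa [hline] using hIcc (one_sub_mul_mem_Icc hδ hn ht)

theorem monotoneOn_sliceSup_one_sub_mul (hsymm : ∀ p ∈ A, (p.1, -p.2) ∈ A) :
    MonotoneOn (fun t => sliceSup A (1 - t * δ)) (Icc 0 n) := fun s hs t ht hst => by
  have hs' := one_sub_mul_mem_Icc hδ hn hs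
  have ht' := one_sub_mul_mem_Icc hδ hn ht
  exact antitoneOn_sliceSup hA hconv hsymm ⟨ht'.1, hIcc ht'⟩ ⟨hs'.1, hIcc hs'⟩
    (by nlinarith)

end Slices

section ConcaveIncrements

variable {g : ℝ → ℝ}

theorem ConcaveOn.mul_sub_le_mul_sub {s : Set ℝ} (hg : ConcaveOn ℝ s g) {x y z : ℝ}
    (hx : x ∈ s) (hz : z ∈ s) (hxy : x ≤ y) (hyz : y ≤ z) :
    (y - x) * (g z - g y) ≤ (z - y) * (g y - g x) := by
  rcases hxy.eq_or_lt with rfl | hxy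
  · simp
  rcases hyz.eq_or_lt with rfl | hyz
  · simp
  have := hg.slope_anti_adjacent hx hz hxy hyz
  rw [div_le_div_iff₀ (by linarith) (by linarith)] at this
  linarith

theorem ConcaveOn.increment_add_one_le {s : Set ℝ} (hg : ConcaveOn ℝ s g) {x : ℝ} (hx : x ∈ s)
    (hx₂ : x + 2 ∈ s) : g (x + 2) - g (x + 1) ≤ g (x + 1) - g x := by
  have := hg.mul_sub_le_mul_sub hx hx₂ (by linarith : x ≤ x + 1) (by linarith)
  rw [show x + 1 - x = 1 by ring, show x + 2 - (x + 1) = 1 by ring] at this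
  linarith

variable {n : ℝ} (hg : ConcaveOn ℝ (Icc 0 n) g) (hmono : MonotoneOn g (Icc 0 n)) (hg0 : 0 ≤ g 0)
include hg hmono hg0

/-- By concavity, the increments of `g` next to `t` are at most the average increment `g t / t`
over `[0, t]`. -/
theorem ConcaveOn.increments_le_mul {c t : ℝ} (hc : 0 < c) (hct : 1 ≤ c * t) (ht : 1 ≤ t)
    (htn : t + 1 ≤ n) :
    g (t + 1) - g t ≤ c * g t ∧ g t - g (t - 1) ≤ c * g t := by
  have hmem : ∀ u, 0 ≤ u → u ≤ n → u ∈ Icc 0 n := fun u h₁ h₂ => ⟨h₁, h₂⟩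
  have h0 := hmem 0 le_rfl (by linarith)
  have ht₀ := hmem t (by linarith) (by linarith)
  have ht₁ := hmem (t + 1) (by linarith) htn
  have htm := hmem (t - 1) (by linarith) (by linarith)
  have key : ∀ D, 0 ≤ D → t * D ≤ g t → D ≤ c * g t := fun D hD h => by
    linarith [mul_le_mul_of_nonneg_right hct hD, mul_le_mul_of_nonneg_left h hc.le]
  have hright := hg.mul_sub_le_mul_sub h0 ht₁ (by linarith) (by linarith : t ≤ t + 1)
  have hleft := hg.mul_sub_le_mul_sub h0 ht₀ (by linarith) (by linarith : t - 1 ≤ t)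
  exact ⟨key _ (by linarith [hmono ht₀ ht₁ (by linarith)]) (by linarith),
    key _ (by linarith [hmono htm ht₀ (by linarith)]) (by linarith)⟩

theorem ConcaveOn.increment_drops_le {δ c t : ℝ} (hδ : 0 ≤ δ) (hc : 0 < c) (hct : 1 ≤ c * t)
    (ht : 1 ≤ t) (htn : t + 2 ≤ n) :
    g t + 2 * δ * g (t + 1) + ((g (t + 1) - g t) - (g (t + 2) - g (t + 1)))
        ≤ (1 + (4 * δ + c)) * g t ∧
      g (t + 1) + 2 * δ * g t + ((g t - g (t - 1)) - (g (t + 1) - g t))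
        ≤ (1 + (4 * δ + c)) * g (t + 1) := by
  have hmem : ∀ u, 0 ≤ u → u ≤ n → u ∈ Icc 0 n := fun u h₁ h₂ => ⟨h₁, h₂⟩
  obtain ⟨hD, hE⟩ := hg.increments_le_mul hmono hg0 hc hct ht (by linarith)
  obtain ⟨hD₁, -⟩ := hg.increments_le_mul hmono hg0 one_pos (by linarith) ht (by linarith)
  have ht₀ := hmem t (by linarith) (by linarith)
  have ht₁ := hmem (t + 1) (by linarith) (by linarith)
  have hgt : 0 ≤ g t := hg0.trans (hmono (hmem 0 le_rfl (by linarith)) ht₀ (by linarith))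
  have hgt₁ := hmono ht₀ ht₁ (by linarith)
  have hgt₂ := hmono ht₁ (hmem (t + 2) (by linarith) htn) (by linarith)
  constructor
  · linarith [mul_le_mul_of_nonneg_left hD₁ hδ]
  · linarith [mul_le_mul_of_nonneg_left hgt₁ hδ, mul_le_mul_of_nonneg_left hgt₁ hc.le,
      mul_nonneg hδ hgt]

end ConcaveIncrements

theorem stmt_6_general
    (δ : ℝ) (hδ0 : 0 < δ)
    (k : ℕ) (hk : (k : ℝ) = 1 / δ)
    (A : Set (ℝ × ℝ))
    (hcomp : IsCompact A) (hconv : Convex ℝ A)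
    (hsymmy : ∀ p ∈ A, (p.1, -p.2) ∈ A)
    (h01 : ((0 : ℝ), (1 : ℝ)) ∈ frontier A) :
    let r : ℕ → ℝ := fun i => sSup {x : ℝ | (x, 1 - (i : ℝ) * δ) ∈ A}
    let L : ℕ → ℝ := fun i => if i = 0 then r 0 else r i - r (i - 1)
    let ω : ℝ := 4 * δ + Real.sqrt δ
    (∀ i : ℕ, 1 ≤ i → i + 1 ≤ k → L (i + 1) ≤ L i) ∧
    (∀ i : ℕ, 1 / Real.sqrt δ + 1 ≤ (i : ℝ) → i ≤ k - 1 →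
      (1 + ω) * r (i - 1) ≥ r (i - 1) + 2 * δ * r i + (L i - L (i + 1)) ∧
      (1 + ω) * r i ≥ r i + 2 * δ * r (i - 1) + (L (i - 1) - L i)) := by
  intro r L ω
  set g : ℝ → ℝ := fun t => sliceSup A (1 - t * δ)
  have hkδ : (k : ℝ) * δ ≤ 1 := by rw [hk, one_div, inv_mul_cancel₀ hδ0.ne']
  have h01A : ((0 : ℝ), (1 : ℝ)) ∈ A := hcomp.isClosed.frontier_subset h01
  have hIcc : Icc 0 1 ⊆ Prod.snd '' A :=
    (Icc_subset_Icc (by norm_num) le_rfl).trans (Icc_subset_image_snd hconv hsymmy h01A)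
  have hconc := concaveOn_sliceSup_one_sub_mul hcomp hconv hIcc hδ0.le hkδ
  have hmono := monotoneOn_sliceSup_one_sub_mul hcomp hconv hIcc hδ0.le hkδ hsymmy
  have hg0 : 0 ≤ g 0 := hcomp.le_sliceSup (by simpa using h01A)
  have hL : ∀ j : ℕ, L (j + 1) = r (j + 1) - r j := fun j => if_neg j.succ_ne_zero
  have hr : ∀ (j : ℕ) (t : ℝ), (j : ℝ) = t → r j = g t := fun j t h => h ▸ rfl
  refine ⟨fun i hi hik => ?_, fun i hi hik => ?_⟩
  · obtain ⟨m, rfl⟩ : ∃ m, i = m + 1 := ⟨i - 1, by omega⟩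
    rw [hL, hL, hr m m rfl, hr (m + 1) (m + 1) (by push_cast; ring),
      hr (m + 1 + 1) (m + 2) (by push_cast; ring)]
    have hm : (m : ℝ) + 2 ≤ k := by exact_mod_cast hik
    exact hconc.increment_add_one_le ⟨m.cast_nonneg, by linarith⟩ ⟨by positivity, hm⟩
  · have hs : 0 < √δ := Real.sqrt_pos.2 hδ0
    have hi2 : 1 < i := by
      have : 0 < 1 / √δ := by positivity
      exact_mod_cast (by linarith : (1 : ℝ) < i)
    obtain ⟨m, rfl⟩ : ∃ m, i = m + 2 := ⟨i - 2, by omega⟩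
    show (1 + ω) * r (m + 1) ≥ r (m + 1) + 2 * δ * r (m + 2) + (L (m + 2) - L (m + 3)) ∧
      (1 + ω) * r (m + 2) ≥ r (m + 2) + 2 * δ * r (m + 1) + (L (m + 1) - L (m + 2))
    have hst : 1 ≤ √δ * (m + 1) := by
      push_cast at hi
      rw [div_add_one hs.ne', div_le_iff₀ hs] at hi
      linarith
    rw [hL, hL, hL, hr m (m + 1 - 1) (by ring), hr (m + 1) (m + 1) (by push_cast; ring),
      hr (m + 2) (m + 1 + 1) (by push_cast; ring), hr (m + 3) (m + 1 + 2) (by push_cast; ring)]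
    exact hconc.increment_drops_le hmono hg0 hδ0.le hs hst (by linarith [m.cast_nonneg (α := ℝ)])
      (by exact_mod_cast (by omega : m + 3 ≤ k))

/-- The key inequalities \eqref{E:B_i-1} and \eqref{E:T_i} in the proof of
Proposition `P:2Dpoly`, together with the monotonicity L₁ ≥ L₂ ≥ ⋯ ≥ L_k. -/
theorem stmt_6
    (δ : ℝ) (hδ0 : 0 < δ) (hδ4 : δ < 1 / 4)
    (k : ℕ) (hk : (k : ℝ) = 1 / δ)
    (A : Set (ℝ × ℝ))
    (hcomp : IsCompact A) (hconv : Convex ℝ A)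
    (hint : (interior A).Nonempty)
    (hsymmx : ∀ p ∈ A, (-p.1, p.2) ∈ A)
    (hsymmy : ∀ p ∈ A, (p.1, -p.2) ∈ A)
    (h10 : ((1 : ℝ), (0 : ℝ)) ∈ frontier A)
    (h01 : ((0 : ℝ), (1 : ℝ)) ∈ frontier A) :
    let r : ℕ → ℝ := fun i => sSup {x : ℝ | (x, 1 - (i : ℝ) * δ) ∈ A}
    let L : ℕ → ℝ := fun i => if i = 0 then r 0 else r i - r (i - 1)
    let ω : ℝ := 4 * δ + Real.sqrt δ
    (∀ i : ℕ, 1 ≤ i → i + 1 ≤ k → L (i + 1) ≤ L i) ∧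
    (∀ i : ℕ, 1 / Real.sqrt δ + 1 ≤ (i : ℝ) → i ≤ k - 1 →
      (1 + ω) * r (i - 1) ≥ r (i - 1) + 2 * δ * r i + (L i - L (i + 1)) ∧
      (1 + ω) * r i ≥ r i + 2 * δ * r (i - 1) + (L (i - 1) - L i)) :=
  stmt_6_general δ hδ0 k hk A hcomp hconv hsymmy h01
end

section
/- Let 0 < δ < 1/4 and 0 < r₁ ≤ 1, and set α = ((1+δ)r₁ − δ)/((1 − 2δ − δ²)r₁ + δ) (assume the denominator is positive). Then 1 + 4δ + δ^{1/2} ≥ α, and moreover (1 − δ)(4δ + δ^{1/2}) ≥ δ(1 + α). -/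
/-! Writing `δ = s ^ 2` with `s = √δ < 1 / 2` turns both inequalities into polynomial ones
in `s`. After clearing the positive denominator, the first is affine in `r₁`, so it suffices to
check it at `r₁ = 0` and `r₁ = 1`; the second follows from the first together with
`(1 - δ) ω ≥ δ (2 + ω)` for `ω = 4δ + √δ`. -/

open Real

lemma add_mul_nonneg_of_nonneg_of_add_nonneg {a b r : ℝ} (ha : 0 ≤ a) (hab : 0 ≤ a + b)
    (hr0 : 0 ≤ r) (hr1 : r ≤ 1) : 0 ≤ a + b * r := by
  have : a + b * r = (1 - r) * a + r * (a + b) := by ring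
  rw [this]
  have := sub_nonneg.2 hr1
  positivity

lemma numerator_le_mul_denominator {s r : ℝ} (hs0 : 0 ≤ s) (hs : s ≤ 1 / 2)
    (hr0 : 0 ≤ r) (hr1 : r ≤ 1) :
    (1 + s ^ 2) * r - s ^ 2
      ≤ (1 + 4 * s ^ 2 + s) * ((1 - 2 * s ^ 2 - (s ^ 2) ^ 2) * r + s ^ 2) := by
  have hexpand : (1 + 4 * s ^ 2 + s) * ((1 - 2 * s ^ 2 - (s ^ 2) ^ 2) * r + s ^ 2)
      - ((1 + s ^ 2) * r - s ^ 2)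
      = s ^ 2 * (2 + s + 4 * s ^ 2)
        + (s + s ^ 2 - 2 * s ^ 3 - 9 * s ^ 4 - s ^ 5 - 4 * s ^ 6) * r := by ring
  have hat0 : 0 ≤ s ^ 2 * (2 + s + 4 * s ^ 2) := by positivity
  have hat1 : 0 ≤ s ^ 2 * (2 + s + 4 * s ^ 2)
      + (s + s ^ 2 - 2 * s ^ 3 - 9 * s ^ 4 - s ^ 5 - 4 * s ^ 6) := by
    nlinarith [pow_nonneg hs0 2, pow_nonneg hs0 3, pow_nonneg hs0 4, pow_nonneg hs0 5,
      mul_nonneg (pow_nonneg hs0 2) (sub_nonneg.2 hs),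
      mul_nonneg (pow_nonneg hs0 3) (sub_nonneg.2 hs),
      mul_nonneg (pow_nonneg hs0 4) (sub_nonneg.2 hs),
      mul_nonneg (pow_nonneg hs0 5) (sub_nonneg.2 hs)]
  linarith [add_mul_nonneg_of_nonneg_of_add_nonneg hat0 hat1 hr0 hr1]

lemma sq_mul_two_add_le {s : ℝ} (hs0 : 0 ≤ s) (hs : s ≤ 1 / 2) :
    s ^ 2 * (2 + (4 * s ^ 2 + s)) ≤ (1 - s ^ 2) * (4 * s ^ 2 + s) := by
  nlinarith [pow_nonneg hs0 2, pow_nonneg hs0 3, mul_nonneg (pow_nonneg hs0 2) (sub_nonneg.2 hs),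
    mul_nonneg (pow_nonneg hs0 3) (sub_nonneg.2 hs)]

/-- The inequalities \eqref{E:xR0} and \eqref{E:yR0}: the corner point R₀ in the
sharp-top case is covered by the (1+ω(δ))-dilation. -/
theorem stmt_9
    (δ r₁ : ℝ) (hδ0 : 0 < δ) (hδ4 : δ < 1 / 4)
    (hr₁0 : 0 < r₁) (hr₁1 : r₁ ≤ 1)
    (hden : 0 < (1 - 2 * δ - δ ^ 2) * r₁ + δ) :
    let α : ℝ := ((1 + δ) * r₁ - δ) / ((1 - 2 * δ - δ ^ 2) * r₁ + δ)
    1 + 4 * δ + Real.sqrt δ ≥ α ∧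
    (1 - δ) * (4 * δ + Real.sqrt δ) ≥ δ * (1 + α) := by
  intro α
  obtain ⟨s, hs0, rfl⟩ : ∃ s, 0 ≤ s ∧ δ = s ^ 2 :=
    ⟨√δ, sqrt_nonneg δ, (sq_sqrt hδ0.le).symm⟩
  rw [sqrt_sq hs0]
  have hs : s ≤ 1 / 2 := by nlinarith
  have hα : α ≤ 1 + 4 * s ^ 2 + s :=
    (div_le_iff₀ hden).2 (numerator_le_mul_denominator hs0 hs hr₁0.le hr₁1)
  refine ⟨hα, ?_⟩
  calc s ^ 2 * (1 + α) ≤ s ^ 2 * (2 + (4 * s ^ 2 + s)) :=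
        mul_le_mul_of_nonneg_left (by linarith) (sq_nonneg s)
    _ ≤ (1 - s ^ 2) * (4 * s ^ 2 + s) := sq_mul_two_add_le hs0 hs
end

section
/- Let Y be a normed space, Z = (ℝ², ‖·‖_Z) a space with normalized 1-unconditional basis, and X = Y ⊕_Z Y with ‖(u,v)‖_X = ‖(‖u‖_Y, ‖v‖_Y)‖_Z. Fix ε ∈ (0,1), r > 0, and R determined by (ε/c_Z)·ln(R/r) = π/2, where c_Z is the Lipschitz constant of the normalized curve u(τ) = (cos τ, sin τ)/‖(cos τ, sin τ)‖_Z on [0, π/2]. Define τ(t) = (ε/c_Z)·ln(t/r) for t ∈ [r,R], c(x) = cos τ(‖x‖)/‖(cos τ(‖x‖), sin τ(‖x‖))‖_Z and s(x) = sin τ(‖x‖)/‖(cos τ(‖x‖), sin τ(‖x‖))‖_Z for r ≤ ‖x‖ ≤ R, with c(x)=1, s(x)=0 for ‖x‖ ≤ r and c(x)=0, s(x)=1 for ‖x‖ ≥ R, and T x = (c(x)x, s(x)x). Then ‖Tx‖_X = ‖x‖_Y for all x ∈ Y, and (1−ε)‖x−y‖_Y ≤ ‖Tx − Ty‖_X ≤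 (1+ε)‖x−y‖_Y for all x, y ∈ Y. In particular T is a ((1+ε)/(1−ε))-bilipschitz embedding coinciding with y ↦ (y,0) on the ball of radius r and with y ↦ (0,y) outside the ball of radius R. -/
/-!
The profile `φ(t) = (c, s)` runs along the unit sphere of `Z`, so `‖T x‖_X = ‖x‖ ‖φ(‖x‖)‖_Z = ‖x‖`.
For `‖y‖ ≤ ‖x‖` split `T x - T y = φ(‖x‖) (x - y) + (φ(‖x‖) - φ(‖y‖)) y`. The first term has
`X`-norm `‖x - y‖`; since the unit curve is `c_Z`-Lipschitz and `τ` grows like `(ε / c_Z) log t`,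
the second has norm at most `ε ‖y‖ log (‖x‖ / ‖y‖) ≤ ε (‖x‖ - ‖y‖) ≤ ε ‖x - y‖`. The triangle
inequality for `‖·‖_X` comes from the monotonicity of 1-unconditional norms in `|a|` and `|b|`.
-/

open Real Set

namespace Seminorm

variable (p : Seminorm ℝ (ℝ × ℝ))

def IsUnconditional : Prop := ∀ a b : ℝ, p (-a, b) = p (a, b) ∧ p (a, -b) = p (a, b)

namespace IsUnconditional

variable {p}
variable (hp : p.IsUnconditional)
include hp

lemma apply_abs_fst (a b : ℝ) : p (|a|, b) = p (a, b) := by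
  rcases abs_choice a with h | h <;> rw [h]
  exact (hp a b).1

lemma apply_abs_snd (a b : ℝ) : p (a, |b|) = p (a, b) := by
  rcases abs_choice b with h | h <;> rw [h]
  exact (hp a b).2

lemma mono_fst {a a' : ℝ} (b : ℝ) (h : |a| ≤ |a'|) : p (a, b) ≤ p (a', b) := by
  have hseg : (a, b) ∈ segment ℝ (-|a'|, b) (|a'|, b) := by
    rw [← Prod.image_mk_segment_left, segment_eq_Icc (neg_le_self (abs_nonneg a'))]
    exact ⟨a, abs_le.1 h, rfl⟩
  have := p.convexOn.le_on_segment (mem_univ _) (mem_univ _) hseg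
  rwa [(hp _ b).1, hp.apply_abs_fst, max_self] at this

lemma mono_snd (a : ℝ) {b b' : ℝ} (h : |b| ≤ |b'|) : p (a, b) ≤ p (a, b') := by
  have hseg : (a, b) ∈ segment ℝ (a, -|b'|) (a, |b'|) := by
    rw [← Prod.image_mk_segment_right, segment_eq_Icc (neg_le_self (abs_nonneg b'))]
    exact ⟨b, abs_le.1 h, rfl⟩
  have := p.convexOn.le_on_segment (mem_univ _) (mem_univ _) hseg
  rwa [(hp a _).2, hp.apply_abs_snd, max_self] at this

lemma abs_fst_le (h10 : p (1, 0) = 1) (a b : ℝ) : |a| ≤ p (a, b) :=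
  calc |a| = p (a • (1, 0)) := by rw [map_smul_eq_mul, h10, mul_one, norm_eq_abs]
    _ ≤ p (a, b) := by simpa using hp.mono_snd a (b := 0) (b' := b) (by simp)

lemma abs_snd_le (h01 : p (0, 1) = 1) (a b : ℝ) : |b| ≤ p (a, b) :=
  calc |b| = p (b • (0, 1)) := by rw [map_smul_eq_mul, h01, mul_one, norm_eq_abs]
    _ ≤ p (a, b) := by simpa using hp.mono_fst b (a := 0) (a' := a) (by simp)

lemma cos_sin_pos (h10 : p (1, 0) = 1) (h01 : p (0, 1) = 1) (τ : ℝ) :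
    0 < p (cos τ, sin τ) := by
  refine (apply_nonneg _ _).lt_of_ne fun h => ?_
  have hc := hp.abs_fst_le h10 (cos τ) (sin τ)
  have hs := hp.abs_snd_le h01 (cos τ) (sin τ)
  rw [← h, abs_nonpos_iff] at hc hs
  simpa [hc, hs] using sin_sq_add_cos_sq τ

end IsUnconditional

noncomputable def unitCurve (τ : ℝ) : ℝ × ℝ :=
  (cos τ / p (cos τ, sin τ), sin τ / p (cos τ, sin τ))

def unitCurveSlopes : Set ℝ :=
  {q | ∃ τ₁ τ₂ : ℝ, 0 ≤ τ₁ ∧ τ₁ < τ₂ ∧ τ₂ ≤ π / 2 ∧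
    q = p (p.unitCurve τ₂ - p.unitCurve τ₁) / (τ₂ - τ₁)}

lemma unitCurve_zero (h10 : p (1, 0) = 1) : p.unitCurve 0 = (1, 0) := by
  simp [unitCurve, h10]

lemma unitCurve_pi_div_two (h01 : p (0, 1) = 1) : p.unitCurve (π / 2) = (0, 1) := by
  simp [unitCurve, h01]

lemma IsUnconditional.apply_unitCurve {p : Seminorm ℝ (ℝ × ℝ)} (hp : p.IsUnconditional)
    (h10 : p (1, 0) = 1) (h01 : p (0, 1) = 1) (τ : ℝ) : p (p.unitCurve τ) = 1 := by
  have hpos := hp.cos_sin_pos h10 h01 τ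
  have : p.unitCurve τ = (p (cos τ, sin τ))⁻¹ • (cos τ, sin τ) := by
    simp [unitCurve, div_eq_inv_mul]
  rw [this, map_smul_eq_mul, norm_inv, norm_of_nonneg hpos.le, inv_mul_cancel₀ hpos.ne']

lemma apply_unitCurve_sub_le (hbdd : BddAbove p.unitCurveSlopes) {τ₁ τ₂ : ℝ} (h₁ : 0 ≤ τ₁)
    (h₁₂ : τ₁ ≤ τ₂) (h₂ : τ₂ ≤ π / 2) :
    p (p.unitCurve τ₂ - p.unitCurve τ₁) ≤ sSup p.unitCurveSlopes * (τ₂ - τ₁) := by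
  rcases h₁₂.eq_or_lt with rfl | h
  · simp
  · rw [← div_le_iff₀ (sub_pos.2 h)]
    exact le_csSup hbdd ⟨τ₁, τ₂, h₁, h, h₂, rfl⟩

section SumNorm

variable {Y : Type*} [SeminormedAddCommGroup Y]

def sumNorm (q : Y × Y) : ℝ := p (‖q.1‖, ‖q.2‖)

lemma sumNorm_neg (q : Y × Y) : p.sumNorm (-q) = p.sumNorm q := by
  simp [sumNorm]

variable {p}

lemma IsUnconditional.sumNorm_add_le (hp : p.IsUnconditional) (q q' : Y × Y) :
    p.sumNorm (q + q') ≤ p.sumNorm q + p.sumNorm q' :=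
  calc p (‖q.1 + q'.1‖, ‖q.2 + q'.2‖) ≤ p ((‖q.1‖, ‖q.2‖) + (‖q'.1‖, ‖q'.2‖)) :=
        (hp.mono_fst _ (by simpa [abs_of_nonneg, add_nonneg] using norm_add_le q.1 q'.1)).trans
          (hp.mono_snd _ (by simpa [abs_of_nonneg, add_nonneg] using norm_add_le q.2 q'.2))
    _ ≤ _ := map_add_le_add p _ _

lemma IsUnconditional.sumNorm_smul_pair [NormedSpace ℝ Y] (hp : p.IsUnconditional)
    (v : ℝ × ℝ) (w : Y) : p.sumNorm (v.1 • w, v.2 • w) = ‖w‖ * p v := by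
  have : ((‖v.1 • w‖, ‖v.2 • w‖) : ℝ × ℝ) = ‖w‖ • (|v.1|, |v.2|) := by
    simp [norm_smul, mul_comm]
  rw [sumNorm, this, map_smul_eq_mul, norm_norm, hp.apply_abs_fst, hp.apply_abs_snd]

end SumNorm

end Seminorm

def bendMap {Y : Type*} [SeminormedAddCommGroup Y] [NormedSpace ℝ Y] (φ : ℝ → ℝ × ℝ) (x : Y) :
    Y × Y :=
  ((φ ‖x‖).1 • x, (φ ‖x‖).2 • x)

namespace Seminorm.IsUnconditional

variable {Y : Type*} [SeminormedAddCommGroup Y] [NormedSpace ℝ Y]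
variable {p : Seminorm ℝ (ℝ × ℝ)} (hp : p.IsUnconditional) {φ : ℝ → ℝ × ℝ}
include hp

lemma sumNorm_bendMap {x : Y} (hφ : p (φ ‖x‖) = 1) : p.sumNorm (bendMap φ x) = ‖x‖ := by
  rw [bendMap, hp.sumNorm_smul_pair, hφ, mul_one]

lemma sumNorm_bendMap_sub_bounds {ε : ℝ} (hε : 0 ≤ ε) (hφ : ∀ t, 0 ≤ t → p (φ t) = 1)
    (hφε : ∀ s t, 0 ≤ s → s ≤ t → s * p (φ t - φ s) ≤ ε * (t - s)) (x y : Y) :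
    (1 - ε) * ‖x - y‖ ≤ p.sumNorm (bendMap φ x - bendMap φ y) ∧
      p.sumNorm (bendMap φ x - bendMap φ y) ≤ (1 + ε) * ‖x - y‖ := by
  wlog hyx : ‖y‖ ≤ ‖x‖ generalizing x y
  · rw [← neg_sub (bendMap φ y), sumNorm_neg, norm_sub_rev]
    exact this y x (le_of_not_ge hyx)
  set P : Y × Y := ((φ ‖x‖).1 • (x - y), (φ ‖x‖).2 • (x - y))
  set Q : Y × Y := ((φ ‖x‖ - φ ‖y‖).1 • y, (φ ‖x‖ - φ ‖y‖).2 • y)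
  have hPQ : bendMap φ x - bendMap φ y = P + Q := by
    ext <;> simp only [bendMap, P, Q, Prod.fst_sub, Prod.snd_sub, Prod.fst_add, Prod.snd_add] <;>
      module
  have hP : p.sumNorm P = ‖x - y‖ :=
    (hp.sumNorm_smul_pair _ _).trans (by rw [hφ _ (norm_nonneg x), mul_one])
  have hQ : p.sumNorm Q ≤ ε * ‖x - y‖ :=
    calc p.sumNorm Q = ‖y‖ * p (φ ‖x‖ - φ ‖y‖) := hp.sumNorm_smul_pair _ _
      _ ≤ ε * (‖x‖ - ‖y‖) := hφε _ _ (norm_nonneg y) hyx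
      _ ≤ ε * ‖x - y‖ := mul_le_mul_of_nonneg_left (norm_sub_norm_le x y) hε
  have hlower := hp.sumNorm_add_le (P + Q) (-Q)
  have hupper := hp.sumNorm_add_le P Q
  rw [add_neg_cancel_right, sumNorm_neg, ← hPQ, hP] at hlower
  rw [← hPQ, hP] at hupper
  constructor <;> linarith

end Seminorm.IsUnconditional

lemma mul_log_div_le_sub {s t : ℝ} (hs : 0 < s) (ht : 0 < t) : s * log (t / s) ≤ t - s :=
  calc s * log (t / s) ≤ s * (t / s - 1) :=
        mul_le_mul_of_nonneg_left (log_le_sub_one_of_pos (div_pos ht hs)) hs.le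
    _ = t - s := by field_simp

lemma Seminorm.mul_apply_sub_projIcc_log_le {E : Type*} [AddCommGroup E] [Module ℝ E]
    (q : Seminorm ℝ E) {u : ℝ → E} {a b c ε r s t : ℝ} (hab : a ≤ b) (hc : 0 < c) (hε : 0 ≤ ε)
    (hr : 0 < r) (hu : ∀ τ₁ τ₂, a ≤ τ₁ → τ₁ ≤ τ₂ → τ₂ ≤ b → q (u τ₂ - u τ₁) ≤ c * (τ₂ - τ₁))
    (hs : 0 ≤ s) (hst : s ≤ t) :
    s * q (u (projIcc a b hab (ε / c * log (t / r))) - u (projIcc a b hab (ε / c * log (s / r))))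
      ≤ ε * (t - s) := by
  rcases hs.eq_or_lt with rfl | hs
  · simpa using mul_nonneg hε hst
  have ht := hs.trans_le hst
  set τ : ℝ → ℝ := fun t => ε / c * log (t / r)
  have hτ : τ s ≤ τ t :=
    mul_le_mul_of_nonneg_left (log_le_log (div_pos hs hr) (by gcongr)) (by positivity)
  have hτ_sub : τ t - τ s = ε / c * log (t / s) := by
    simp only [τ]
    rw [log_div ht.ne' hr.ne', log_div hs.ne' hr.ne', log_div ht.ne' hs.ne']
    ring
  have hproj : (projIcc a b hab (τ t) : ℝ) - projIcc a b hab (τ s) ≤ τ t - τ s := by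
    have := (LipschitzWith.projIcc hab).dist_le_mul (τ t) (τ s)
    rw [NNReal.coe_one, one_mul, Subtype.dist_eq, dist_eq, dist_eq,
      abs_of_nonneg (sub_nonneg.2 hτ)] at this
    exact (le_abs_self _).trans this
  calc s * q (u (projIcc a b hab (τ t)) - u (projIcc a b hab (τ s)))
      ≤ s * (c * (ε / c * log (t / s))) := by
        gcongr
        refine (hu _ _ (projIcc a b hab _).2.1 (monotone_projIcc hab hτ)
          (projIcc a b hab _).2.2).trans ?_
        exact mul_le_mul_of_nonneg_left (hproj.trans hτ_sub.le) hc.le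
    _ = ε * (s * log (t / s)) := by field_simp
    _ ≤ ε * (t - s) := mul_le_mul_of_nonneg_left (mul_log_div_le_sub hs ht) hε

lemma Seminorm.unitCurve_projIcc_log (p : Seminorm ℝ (ℝ × ℝ)) (h10 : p (1, 0) = 1)
    (h01 : p (0, 1) = 1) {κ r R t : ℝ} (hr : 0 < r) (hrR : r < R) (hκ : 0 ≤ κ)
    (hR : κ * log (R / r) = π / 2) (ht : 0 ≤ t) :
    p.unitCurve (projIcc 0 (π / 2) pi_div_two_pos.le (κ * log (t / r))) =
      (if t ≤ r then 1 else if R ≤ t then 0 else (p.unitCurve (κ * log (t / r))).1,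
       if t ≤ r then 0 else if R ≤ t then 1 else (p.unitCurve (κ * log (t / r))).2) := by
  have hmono {t₁ t₂ : ℝ} (h₁ : 0 < t₁) (h₁₂ : t₁ ≤ t₂) : κ * log (t₁ / r) ≤ κ * log (t₂ / r) :=
    mul_le_mul_of_nonneg_left (log_le_log (div_pos h₁ hr) (by gcongr)) hκ
  split_ifs with htr htR
  · rw [projIcc_of_le_left _ (mul_nonpos_of_nonneg_of_nonpos hκ
      (log_nonpos (div_nonneg ht hr.le) ((div_le_one hr).2 htr)))]
    exact p.unitCurve_zero h10
  · rw [projIcc_of_right_le _ (hR ▸ hmono (hr.trans hrR) htR)]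
    exact p.unitCurve_pi_div_two h01
  · rw [not_le] at htr htR
    rw [projIcc_of_mem _ ⟨mul_nonneg hκ (log_nonneg ((one_le_div hr).2 htr.le)),
      hR ▸ hmono (hr.trans htr) htR.le⟩]

theorem stmt_10_general
    {Y : Type*} [NormedAddCommGroup Y] [NormedSpace ℝ Y]
    (nZ : ℝ × ℝ → ℝ)
    (hN_add : ∀ p q, nZ (p + q) ≤ nZ p + nZ q)
    (hN_smul : ∀ (t : ℝ) p, nZ (t • p) = |t| * nZ p)
    (h10 : nZ (1, 0) = 1) (h01 : nZ (0, 1) = 1)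
    (huncond : ∀ a b : ℝ, nZ (-a, b) = nZ (a, b) ∧ nZ (a, -b) = nZ (a, b))
    (cZ : ℝ)
    (hcZ : cZ = sSup {q | ∃ τ₁ τ₂ : ℝ, 0 ≤ τ₁ ∧ τ₁ < τ₂ ∧ τ₂ ≤ π / 2 ∧
      q = nZ ((Real.cos τ₂ / nZ (Real.cos τ₂, Real.sin τ₂),
               Real.sin τ₂ / nZ (Real.cos τ₂, Real.sin τ₂)) -
              (Real.cos τ₁ / nZ (Real.cos τ₁, Real.sin τ₁),
               Real.sin τ₁ / nZ (Real.cos τ₁, Real.sin τ₁))) / (τ₂ - τ₁)})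
    (ε r R : ℝ) (hε0 : 0 < ε) (hr : 0 < r) (hrR : r < R)
    (hR : ε / cZ * Real.log (R / r) = π / 2) :
    let τf : ℝ → ℝ := fun t => ε / cZ * Real.log (t / r)
    let cf : ℝ → ℝ := fun t =>
      if t ≤ r then 1 else if R ≤ t then 0 else
        Real.cos (τf t) / nZ (Real.cos (τf t), Real.sin (τf t))
    let sf : ℝ → ℝ := fun t =>
      if t ≤ r then 0 else if R ≤ t then 1 else
        Real.sin (τf t) / nZ (Real.cos (τf t), Real.sin (τf t))
    let T : Y → Y × Y := fun x => (cf ‖x‖ • x, sf ‖x‖ • x)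
    let NX : Y × Y → ℝ := fun p => nZ (‖p.1‖, ‖p.2‖)
    (∀ x : Y, NX (T x) = ‖x‖) ∧
    (∀ x y : Y, (1 - ε) * ‖x - y‖ ≤ NX (T x - T y) ∧
      NX (T x - T y) ≤ (1 + ε) * ‖x - y‖) ∧
    (∀ x : Y, ‖x‖ ≤ r → T x = (x, 0)) ∧
    (∀ x : Y, R ≤ ‖x‖ → T x = (0, x)) := by
  obtain ⟨p, rfl⟩ : ∃ p : Seminorm ℝ (ℝ × ℝ), ⇑p = nZ := ⟨Seminorm.of nZ hN_add hN_smul, rfl⟩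
  intro τf cf sf T NX
  have hp : p.IsUnconditional := huncond
  have hcZ_pos : 0 < cZ := (div_pos_iff_of_pos_left hε0).1 <|
    pos_of_mul_pos_left (hR ▸ pi_div_two_pos) (log_pos ((one_lt_div hr).2 hrR)).le
  -- if the slopes were unbounded, `sSup` would be the junk value `0`
  have hbdd : BddAbove p.unitCurveSlopes := by
    by_contra h
    exact hcZ_pos.ne' (hcZ.trans (Real.sSup_of_not_bddAbove h))
  set φ : ℝ → ℝ × ℝ := fun t => p.unitCurve (projIcc 0 (π / 2) pi_div_two_pos.le (τf t))
  have hT : T = bendMap φ := funext fun x => by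
    simp only [T, bendMap, φ]
    rw [p.unitCurve_projIcc_log h10 h01 hr hrR (by positivity) hR (norm_nonneg x)]
    rfl
  have hφ : ∀ t, 0 ≤ t → p (φ t) = 1 := fun _ _ => hp.apply_unitCurve h10 h01 _
  have hφε (s t : ℝ) (hs : 0 ≤ s) (hst : s ≤ t) : s * p (φ t - φ s) ≤ ε * (t - s) :=
    p.mul_apply_sub_projIcc_log_le _ hcZ_pos hε0.le hr
      (fun _ _ h₁ h₁₂ h₂ => hcZ ▸ p.apply_unitCurve_sub_le hbdd h₁ h₁₂ h₂) hs hst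
  refine ⟨fun x => ?_, fun x y => ?_, fun x hx => ?_, fun x hx => ?_⟩
  · rw [hT]
    exact hp.sumNorm_bendMap (hφ _ (norm_nonneg x))
  · rw [hT]
    exact hp.sumNorm_bendMap_sub_bounds hε0.le hφ hφε x y
  · simp [T, cf, sf, hx]
  · simp [T, cf, sf, hx, not_le.2 (hrR.trans_le hx)]

/-- Theorem `T:BendDetail`: the logarithmic-spiral bending map T x = (c(x)x, s(x)x)
of Y into X = Y ⊕_Z Y is norm-preserving, (1±ε)-bilipschitz, coincides with
y ↦ (y,0) on the ball of radius r and with y ↦ (0,y) outside the ball of radius R. -/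
theorem stmt_10
    {Y : Type*} [NormedAddCommGroup Y] [NormedSpace ℝ Y]
    (nZ : ℝ × ℝ → ℝ)
    (hN_add : ∀ p q, nZ (p + q) ≤ nZ p + nZ q)
    (hN_smul : ∀ (t : ℝ) p, nZ (t • p) = |t| * nZ p)
    (hN_def : ∀ p, nZ p = 0 → p = 0)
    (h10 : nZ (1, 0) = 1) (h01 : nZ (0, 1) = 1)
    (huncond : ∀ a b : ℝ, nZ (-a, b) = nZ (a, b) ∧ nZ (a, -b) = nZ (a, b))
    (cZ : ℝ)
    (hcZ : cZ = sSup {q | ∃ τ₁ τ₂ : ℝ, 0 ≤ τ₁ ∧ τ₁ < τ₂ ∧ τ₂ ≤ π / 2 ∧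
      q = nZ ((Real.cos τ₂ / nZ (Real.cos τ₂, Real.sin τ₂),
               Real.sin τ₂ / nZ (Real.cos τ₂, Real.sin τ₂)) -
              (Real.cos τ₁ / nZ (Real.cos τ₁, Real.sin τ₁),
               Real.sin τ₁ / nZ (Real.cos τ₁, Real.sin τ₁))) / (τ₂ - τ₁)})
    (ε r R : ℝ) (hε0 : 0 < ε) (hε1 : ε < 1) (hr : 0 < r) (hrR : r < R)
    (hR : ε / cZ * Real.log (R / r) = π / 2) :
    let τf : ℝ → ℝ := fun t => ε / cZ * Real.log (t / r)
    let cf : ℝ → ℝ := fun t =>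
      if t ≤ r then 1 else if R ≤ t then 0 else
        Real.cos (τf t) / nZ (Real.cos (τf t), Real.sin (τf t))
    let sf : ℝ → ℝ := fun t =>
      if t ≤ r then 0 else if R ≤ t then 1 else
        Real.sin (τf t) / nZ (Real.cos (τf t), Real.sin (τf t))
    let T : Y → Y × Y := fun x => (cf ‖x‖ • x, sf ‖x‖ • x)
    let NX : Y × Y → ℝ := fun p => nZ (‖p.1‖, ‖p.2‖)
    (∀ x : Y, NX (T x) = ‖x‖) ∧
    (∀ x y : Y, (1 - ε) * ‖x - y‖ ≤ NX (T x - T y) ∧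
      NX (T x - T y) ≤ (1 + ε) * ‖x - y‖) ∧
    (∀ x : Y, ‖x‖ ≤ r → T x = (x, 0)) ∧
    (∀ x : Y, R ≤ ‖x‖ → T x = (0, x)) :=
  stmt_10_general nZ hN_add hN_smul h10 h01 huncond cZ hcZ ε r R hε0 hr hrR hR
end

section
/- Let X = X₁ ⊕ X₂ be a direct sum of Banach spaces with direct sum projections of norm at most A ≥ 1, let Y₁ ⊆ X₁ and Y₂ ⊆ X₂ be finite-dimensional subspaces with Euclidean norms induced from X, let 0 < α with 1 − α(1 + (2−α)A) > 0, and suppose: (A) there is an α-net N₂ of the unit sphere of Y₂ such that (1−α)‖y₁+y₂‖ ≤ ‖O₁y₁+y₂‖ ≤ (1+α)‖y₁+y₂‖ for all y₁ ∈ Y₁, all scalar multiples y₂ of elements of N₂, and all orthogonal O₁ on Y₁; and (B) there is an α-net N₁ of the unit sphere of Y₁ such that (1−α)‖y₁+y₂‖ ≤ ‖y₁+O₂y₂‖ ≤ (1+α)‖y₁+y₂‖ for all scalar multiples y₁ of elements of N₁, all y₂ ∈ Y₂, and all orthogonal O₂ on Y₂. Then for all y₁ ∈ Y₁, y₂ ∈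 Y₂ and all orthogonal operators O₁ on Y₁, O₂ on Y₂: (1 − α(1+(2−α)A))² ‖y₁+y₂‖ ≤ ‖O₁y₁ + O₂y₂‖ ≤ (1 + α(1+(2+α)A))² ‖y₁+y₂‖. -/
/-!
Changing one coordinate by an orthogonal operator only distorts the norm by a factor in
`[1 - α(1 + (2 - α)A), 1 + α(1 + (2 + α)A)]`: write the other coordinate `y` as `‖y‖ • z` plus an
error `e` with `z` in the net, so that `‖e‖ ≤ α‖y‖ ≤ αA‖(x, y)‖` by the bound on the projection;
the net condition controls the norm at `(x, ‖y‖ • z)`, and adding `(0, e)` back costs `‖e‖` on each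
side. Moving the two coordinates one after the other squares the factors.
-/

theorem map_add_bounds_of_map_bounds {V F : Type*} [AddCommGroup V] [FunLike F V ℝ]
    [AddGroupSeminormClass F V ℝ] (N : F) {α : ℝ} (hα : |α| ≤ 1) {p p' : V}
    (hlo : (1 - α) * N p ≤ N p') (hhi : N p' ≤ (1 + α) * N p) (d : V) :
    (1 - α) * N (p + d) - (2 - α) * N d ≤ N (p' + d) ∧
      N (p' + d) ≤ (1 + α) * N (p + d) + (2 + α) * N d := by
  have perturb (q : V) : |N (q + d) - N q| ≤ N d := by
    simpa only [add_sub_cancel_left] using abs_sub_map_le_sub N (q + d) q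
  have hp := abs_le.mp (perturb p)
  have hp' := abs_le.mp (perturb p')
  have hα' := abs_le.mp hα
  constructor <;> nlinarith

theorem exists_mem_net_norm_sub_smul_le {E : Type*} [NormedAddCommGroup E] [NormedSpace ℝ E]
    {S : Set E} {α : ℝ} (hS : ∀ y : E, ‖y‖ = 1 → ∃ z ∈ S, ‖y - z‖ < α) {y : E} (hy : y ≠ 0) :
    ∃ z ∈ S, ‖y - ‖y‖ • z‖ ≤ α * ‖y‖ := by
  obtain ⟨z, hz, hyz⟩ := hS _ (norm_smul_inv_norm (𝕜 := ℝ) hy)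
  refine ⟨z, hz, ?_⟩
  have hy' : ‖y‖ ≠ 0 := norm_ne_zero_iff.mpr hy
  calc ‖y - ‖y‖ • z‖ = ‖‖y‖ • ((‖y‖⁻¹ : ℝ) • y - z)‖ := by rw [smul_sub, smul_inv_smul₀ hy']
    _ = ‖y‖ * ‖(‖y‖⁻¹ : ℝ) • y - z‖ := by rw [norm_smul, norm_norm]
    _ ≤ ‖y‖ * α := by gcongr; exact hyz.le
    _ = α * ‖y‖ := mul_comm _ _

theorem Seminorm.apply_mk_bounds_of_net {E F : Type*} [NormedAddCommGroup E] [NormedSpace ℝ E]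
    [NormedAddCommGroup F] [NormedSpace ℝ F] (p : Seminorm ℝ (E × F))
    (hp₁ : ∀ x : E, p (x, 0) = ‖x‖) (hp₂ : ∀ y : F, p (0, y) = ‖y‖)
    {A : ℝ} (hA : 0 ≤ A) (hproj : ∀ q : E × F, p (0, q.2) ≤ A * p q)
    {α : ℝ} (hα₀ : 0 ≤ α) (hα₁ : α ≤ 1)
    {S : Set F} (hS : ∀ y : F, ‖y‖ = 1 → ∃ z ∈ S, ‖y - z‖ < α)
    {x x' : E} (hx : ‖x'‖ = ‖x‖)
    (hcond : ∀ (t : ℝ), ∀ z ∈ S,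
      (1 - α) * p (x, t • z) ≤ p (x', t • z) ∧ p (x', t • z) ≤ (1 + α) * p (x, t • z))
    (y : F) :
    (1 - α * (1 + (2 - α) * A)) * p (x, y) ≤ p (x', y) ∧
      p (x', y) ≤ (1 + α * (1 + (2 + α) * A)) * p (x, y) := by
  have hαA : 0 ≤ α * A := mul_nonneg hα₀ hA
  rcases eq_or_ne y 0 with rfl | hy
  · rw [hp₁, hp₁, hx]
    have hlo : 0 ≤ α * (1 + (2 - α) * A) := mul_nonneg hα₀ (by nlinarith)
    have hhi : 0 ≤ α * (1 + (2 + α) * A) := by positivity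
    constructor <;> nlinarith [norm_nonneg x]
  obtain ⟨z, hz, hyz⟩ := exists_mem_net_norm_sub_smul_le hS hy
  set e := y - ‖y‖ • z
  have hsplit (u : E) : (u, y) = (u, ‖y‖ • z) + (0, e) := by simp [e]
  have he : p (0, e) ≤ α * A * p (x, y) := by
    calc p (0, e) ≤ α * ‖y‖ := (hp₂ e).trans_le hyz
      _ ≤ α * (A * p (x, y)) := by gcongr; simpa [hp₂] using hproj (x, y)
      _ = α * A * p (x, y) := by ring
  obtain ⟨hlo, hhi⟩ := hcond ‖y‖ z hz
  obtain ⟨hlo', hhi'⟩ :=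
    map_add_bounds_of_map_bounds p (abs_le.mpr ⟨by linarith, hα₁⟩) hlo hhi (0, e)
  rw [← hsplit, ← hsplit] at hlo' hhi'
  have hxy := apply_nonneg p (x, y)
  constructor <;> nlinarith

theorem stmt_15_general
    {Y₁ Y₂ : Type*}
    [NormedAddCommGroup Y₁] [InnerProductSpace ℝ Y₁]
    [NormedAddCommGroup Y₂] [InnerProductSpace ℝ Y₂]
    (NX : Y₁ × Y₂ → ℝ)
    (hN_add : ∀ p q, NX (p + q) ≤ NX p + NX q)
    (hN_smul : ∀ (t : ℝ) p, NX (t • p) = |t| * NX p)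
    (hN_res1 : ∀ y₁ : Y₁, NX (y₁, 0) = ‖y₁‖)
    (hN_res2 : ∀ y₂ : Y₂, NX (0, y₂) = ‖y₂‖)
    (A : ℝ) (hA : 1 ≤ A)
    (hproj : ∀ p : Y₁ × Y₂, NX (p.1, 0) ≤ A * NX p ∧ NX (0, p.2) ≤ A * NX p)
    (α : ℝ) (hα0 : 0 < α) (hα1 : α < 1)
    (hpos : 0 < 1 - α * (1 + (2 - α) * A))
    (N₁ : Set Y₁) (N₂ : Set Y₂)
    (hN₁net : ∀ y₁ : Y₁, ‖y₁‖ = 1 → ∃ z ∈ N₁, ‖y₁ - z‖ < α)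
    (hN₂net : ∀ y₂ : Y₂, ‖y₂‖ = 1 → ∃ z ∈ N₂, ‖y₂ - z‖ < α)
    (hcondA : ∀ (O₁ : Y₁ ≃ₗᵢ[ℝ] Y₁) (y₁ : Y₁) (t : ℝ), ∀ z ∈ N₂,
      (1 - α) * NX (y₁, t • z) ≤ NX (O₁ y₁, t • z) ∧
      NX (O₁ y₁, t • z) ≤ (1 + α) * NX (y₁, t • z))
    (hcondB : ∀ (O₂ : Y₂ ≃ₗᵢ[ℝ] Y₂) (y₂ : Y₂) (t : ℝ), ∀ z ∈ N₁,
      (1 - α) * NX (t • z, y₂) ≤ NX (t • z, O₂ y₂) ∧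
      NX (t • z, O₂ y₂) ≤ (1 + α) * NX (t • z, y₂)) :
    ∀ (O₁ : Y₁ ≃ₗᵢ[ℝ] Y₁) (O₂ : Y₂ ≃ₗᵢ[ℝ] Y₂) (y₁ : Y₁) (y₂ : Y₂),
      (1 - α * (1 + (2 - α) * A)) ^ 2 * NX (y₁, y₂) ≤ NX (O₁ y₁, O₂ y₂) ∧
      NX (O₁ y₁, O₂ y₂) ≤ (1 + α * (1 + (2 + α) * A)) ^ 2 * NX (y₁, y₂) := by
  intro O₁ O₂ y₁ y₂
  let p : Seminorm ℝ (Y₁ × Y₂) := .of NX hN_add fun t q ↦ by rw [hN_smul, Real.norm_eq_abs]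
  let p' : Seminorm ℝ (Y₂ × Y₁) := p.comp (LinearEquiv.prodComm ℝ Y₂ Y₁).toLinearMap
  have hA₀ : 0 ≤ A := by linarith
  obtain ⟨hlo₁, hhi₁⟩ := p.apply_mk_bounds_of_net hN_res1 hN_res2 hA₀ (fun q ↦ (hproj q).2)
    hα0.le hα1.le hN₂net (O₁.norm_map y₁) (hcondA O₁ y₁) y₂
  obtain ⟨hlo₂, hhi₂⟩ := p'.apply_mk_bounds_of_net hN_res2 hN_res1 hA₀ (fun q ↦ (hproj q.swap).1)
    hα0.le hα1.le hN₁net (O₂.norm_map y₂) (hcondB O₂ y₂) (O₁ y₁)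
  have hp (q : Y₁ × Y₂) : p q = NX q := rfl
  have hp' (q : Y₂ × Y₁) : p' q = NX q.swap := rfl
  simp only [hp, hp', Prod.swap_prod_mk] at hlo₁ hhi₁ hlo₂ hhi₂
  set c := 1 - α * (1 + (2 - α) * A)
  set C := 1 + α * (1 + (2 + α) * A)
  constructor
  · calc c ^ 2 * NX (y₁, y₂) = c * (c * NX (y₁, y₂)) := by ring
      _ ≤ c * NX (O₁ y₁, y₂) := by gcongr
      _ ≤ NX (O₁ y₁, O₂ y₂) := hlo₂
  · calc NX (O₁ y₁, O₂ y₂) ≤ C * NX (O₁ y₁, y₂) := hhi₂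
      _ ≤ C * (C * NX (y₁, y₂)) := by gcongr
      _ = C ^ 2 * NX (y₁, y₂) := by ring

/-- Lemma `L:NetToEvery`: the net conditions (A) and (B) imply the two-sided
almost-invariance estimate \eqref{E:Approx} for all orthogonal operators. -/
theorem stmt_15
    {Y₁ Y₂ : Type*}
    [NormedAddCommGroup Y₁] [InnerProductSpace ℝ Y₁] [FiniteDimensional ℝ Y₁]
    [NormedAddCommGroup Y₂] [InnerProductSpace ℝ Y₂] [FiniteDimensional ℝ Y₂]
    (NX : Y₁ × Y₂ → ℝ)
    (hN_add : ∀ p q, NX (p + q) ≤ NX p + NX q)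
    (hN_smul : ∀ (t : ℝ) p, NX (t • p) = |t| * NX p)
    (hN_def : ∀ p, NX p = 0 → p = 0)
    (hN_res1 : ∀ y₁ : Y₁, NX (y₁, 0) = ‖y₁‖)
    (hN_res2 : ∀ y₂ : Y₂, NX (0, y₂) = ‖y₂‖)
    (A : ℝ) (hA : 1 ≤ A)
    (hproj : ∀ p : Y₁ × Y₂, NX (p.1, 0) ≤ A * NX p ∧ NX (0, p.2) ≤ A * NX p)
    (α : ℝ) (hα0 : 0 < α) (hα1 : α < 1)
    (hpos : 0 < 1 - α * (1 + (2 - α) * A))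
    (N₁ : Set Y₁) (N₂ : Set Y₂)
    (hN₁sphere : ∀ z ∈ N₁, ‖z‖ = 1)
    (hN₂sphere : ∀ z ∈ N₂, ‖z‖ = 1)
    (hN₁net : ∀ y₁ : Y₁, ‖y₁‖ = 1 → ∃ z ∈ N₁, ‖y₁ - z‖ < α)
    (hN₂net : ∀ y₂ : Y₂, ‖y₂‖ = 1 → ∃ z ∈ N₂, ‖y₂ - z‖ < α)
    (hcondA : ∀ (O₁ : Y₁ ≃ₗᵢ[ℝ] Y₁) (y₁ : Y₁) (t : ℝ), ∀ z ∈ N₂,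
      (1 - α) * NX (y₁, t • z) ≤ NX (O₁ y₁, t • z) ∧
      NX (O₁ y₁, t • z) ≤ (1 + α) * NX (y₁, t • z))
    (hcondB : ∀ (O₂ : Y₂ ≃ₗᵢ[ℝ] Y₂) (y₂ : Y₂) (t : ℝ), ∀ z ∈ N₁,
      (1 - α) * NX (t • z, y₂) ≤ NX (t • z, O₂ y₂) ∧
      NX (t • z, O₂ y₂) ≤ (1 + α) * NX (t • z, y₂)) :
    ∀ (O₁ : Y₁ ≃ₗᵢ[ℝ] Y₁) (O₂ : Y₂ ≃ₗᵢ[ℝ] Y₂) (y₁ : Y₁) (y₂ : Y₂),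
      (1 - α * (1 + (2 - α) * A)) ^ 2 * NX (y₁, y₂) ≤ NX (O₁ y₁, O₂ y₂) ∧
      NX (O₁ y₁, O₂ y₂) ≤ (1 + α * (1 + (2 + α) * A)) ^ 2 * NX (y₁, y₂) :=
  stmt_15_general NX hN_add hN_smul hN_res1 hN_res2 A hA hproj α hα0 hα1 hpos N₁ N₂ hN₁net hN₂net
    hcondA hcondB
end

section
/- Let X be a normed space with subspaces W₁, W₂ with W₁ ∩ W₂ = {0}, such that both direct sum projections of W₁ ⊕ W₂ (in the X-norm) have norm at most 1 + γ for some γ > 0. Suppose W₁ and W₂ carry norms ‖·‖¹_∼ and ‖·‖²_∼ satisfying (1/(1+γ))‖x‖ⁱ_∼ ≤ ‖x‖_X ≤ ‖x‖ⁱ_∼ for x in Wᵢ. Define on W₁ ⊕ W₂ the norm ‖(x₁,x₂)‖_N = max{‖x₁‖¹_∼, ‖x₂‖²_∼, ‖x₁ + x₂‖_X}. Then the direct sum projections of (W₁ ⊕ W₂, ‖·‖_N) have norm 1, and ‖x₁+x₂‖_X ≤ ‖(x₁,x₂)‖_N ≤ (1+γ)²‖x₁+x₂‖_X for all x₁ ∈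 W₁, x₂ ∈ W₂. -/
/-! Each of the three terms of `‖(x₁,x₂)‖_N` is controlled by `‖x₁ + x₂‖_X`: the last trivially,
and `‖xᵢ‖ⁱ_∼ ≤ (1+γ)‖xᵢ‖_X ≤ (1+γ)²‖x₁ + x₂‖_X` by the norm equivalence on `Wᵢ` followed by the
bound on the projections. On `W₁ ⊕ 0` the term `‖x₁‖_X` is dominated by `‖x₁‖¹_∼`, so `N`
restricts to `‖·‖¹_∼` there, and symmetrically on `0 ⊕ W₂`. -/

section Renorm

variable {X : Type*} [SeminormedAddCommGroup X] [Module ℝ X] {W₁ W₂ : Submodule ℝ X}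

def renorm (n₁ : W₁ → ℝ) (n₂ : W₂ → ℝ) (p : W₁ × W₂) : ℝ :=
  max (n₁ p.1) (max (n₂ p.2) ‖(p.1 : X) + (p.2 : X)‖)

variable (n₁ : W₁ → ℝ) (n₂ : W₂ → ℝ) (x₁ : W₁) (x₂ : W₂)

theorem fst_le_renorm : n₁ x₁ ≤ renorm n₁ n₂ (x₁, x₂) :=
  le_max_left _ _

theorem snd_le_renorm : n₂ x₂ ≤ renorm n₁ n₂ (x₁, x₂) :=
  (le_max_left _ _).trans (le_max_right _ _)

theorem norm_add_le_renorm : ‖(x₁ : X) + (x₂ : X)‖ ≤ renorm n₁ n₂ (x₁, x₂) :=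
  (le_max_right _ _).trans (le_max_right _ _)

theorem renorm_fst_zero (h₁ : ‖(x₁ : X)‖ ≤ n₁ x₁) (h₂ : n₂ 0 = 0) :
    renorm n₁ n₂ (x₁, 0) = n₁ x₁ := by
  simp only [renorm, Submodule.coe_zero, add_zero, h₂]
  exact max_eq_left (max_le ((norm_nonneg _).trans h₁) h₁)

theorem renorm_zero_snd (h₁ : n₁ 0 = 0) (h₂ : ‖(x₂ : X)‖ ≤ n₂ x₂) :
    renorm n₁ n₂ (0, x₂) = n₂ x₂ := by
  simp only [renorm, Submodule.coe_zero, zero_add, h₁, max_eq_left h₂]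
  exact max_eq_right ((norm_nonneg _).trans h₂)

theorem renorm_le {C : ℝ} (hC : 1 ≤ C)
    (hproj₁ : ‖(x₁ : X)‖ ≤ C * ‖(x₁ : X) + (x₂ : X)‖)
    (hproj₂ : ‖(x₂ : X)‖ ≤ C * ‖(x₁ : X) + (x₂ : X)‖)
    (h₁ : n₁ x₁ ≤ C * ‖(x₁ : X)‖) (h₂ : n₂ x₂ ≤ C * ‖(x₂ : X)‖) :
    renorm n₁ n₂ (x₁, x₂) ≤ C ^ 2 * ‖(x₁ : X) + (x₂ : X)‖ := by
  have hC₀ : 0 ≤ C := zero_le_one.trans hC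
  have hbound : ∀ {a b : ℝ}, a ≤ C * b → b ≤ C * ‖(x₁ : X) + (x₂ : X)‖ →
      a ≤ C ^ 2 * ‖(x₁ : X) + (x₂ : X)‖ := fun hab hb => by
    rw [sq, mul_assoc]
    exact hab.trans (mul_le_mul_of_nonneg_left hb hC₀)
  refine max_le (hbound h₁ hproj₁) (max_le (hbound h₂ hproj₂) ?_)
  exact le_mul_of_one_le_left (norm_nonneg _) (one_le_pow₀ hC)

end Renorm

theorem le_mul_of_one_div_mul_le {a b c : ℝ} (hc : 0 < c) (h : 1 / c * a ≤ b) : a ≤ c * b := by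
  rwa [one_div_mul_eq_div, div_le_iff₀' hc] at h

theorem stmt_16_general
    {X : Type*} [NormedAddCommGroup X] [NormedSpace ℝ X]
    (W₁ W₂ : Submodule ℝ X)
    (γ : ℝ) (hγ : 0 < γ)
    (hproj : ∀ (x₁ : W₁) (x₂ : W₂),
      ‖(x₁ : X)‖ ≤ (1 + γ) * ‖(x₁ : X) + (x₂ : X)‖ ∧
      ‖(x₂ : X)‖ ≤ (1 + γ) * ‖(x₁ : X) + (x₂ : X)‖)
    (n₁ : W₁ → ℝ) (n₂ : W₂ → ℝ)
    (hsand₁ : ∀ x : W₁, (1 / (1 + γ)) * n₁ x ≤ ‖(x : X)‖ ∧ ‖(x : X)‖ ≤ n₁ x)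
    (hsand₂ : ∀ x : W₂, (1 / (1 + γ)) * n₂ x ≤ ‖(x : X)‖ ∧ ‖(x : X)‖ ≤ n₂ x) :
    let N : W₁ × W₂ → ℝ := fun p =>
      max (n₁ p.1) (max (n₂ p.2) ‖(p.1 : X) + (p.2 : X)‖)
    (∀ (x₁ : W₁) (x₂ : W₂), n₁ x₁ ≤ N (x₁, x₂) ∧ n₂ x₂ ≤ N (x₁, x₂)) ∧
    (∀ x₁ : W₁, N (x₁, 0) = n₁ x₁) ∧
    (∀ x₂ : W₂, N (0, x₂) = n₂ x₂) ∧
    (∀ (x₁ : W₁) (x₂ : W₂),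
      ‖(x₁ : X) + (x₂ : X)‖ ≤ N (x₁, x₂) ∧
      N (x₁, x₂) ≤ (1 + γ) ^ 2 * ‖(x₁ : X) + (x₂ : X)‖) := by
  intro N
  have hC : 1 ≤ 1 + γ := by linarith
  have hup₁ : ∀ x, n₁ x ≤ (1 + γ) * ‖(x : X)‖ :=
    fun x => le_mul_of_one_div_mul_le (by linarith) (hsand₁ x).1
  have hup₂ : ∀ x, n₂ x ≤ (1 + γ) * ‖(x : X)‖ :=
    fun x => le_mul_of_one_div_mul_le (by linarith) (hsand₂ x).1
  have hzero₁ : n₁ 0 = 0 := le_antisymm (by simpa using hup₁ 0) (by simpa using (hsand₁ 0).2)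
  have hzero₂ : n₂ 0 = 0 := le_antisymm (by simpa using hup₂ 0) (by simpa using (hsand₂ 0).2)
  exact ⟨fun x₁ x₂ => ⟨fst_le_renorm n₁ n₂ x₁ x₂, snd_le_renorm n₁ n₂ x₁ x₂⟩,
    fun x₁ => renorm_fst_zero n₁ n₂ x₁ (hsand₁ x₁).2 hzero₂,
    fun x₂ => renorm_zero_snd n₁ n₂ x₂ hzero₁ (hsand₂ x₂).2,
    fun x₁ x₂ => ⟨norm_add_le_renorm n₁ n₂ x₁ x₂,
      renorm_le n₁ n₂ x₁ x₂ hC (hproj x₁ x₂).1 (hproj x₁ x₂).2 (hup₁ x₁) (hup₂ x₂)⟩⟩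

/-- Lemma `L:Ren_2i-1_2i`: the renorming ‖(x₁,x₂)‖_N = max{‖x₁‖¹_∼, ‖x₂‖²_∼, ‖x₁+x₂‖_X}
makes the direct sum projections have norm 1 and is (1+γ)²-equivalent to the X-norm. -/
theorem stmt_16
    {X : Type*} [NormedAddCommGroup X] [NormedSpace ℝ X]
    (W₁ W₂ : Submodule ℝ X) (hdisj : W₁ ⊓ W₂ = ⊥)
    (γ : ℝ) (hγ : 0 < γ)
    (hproj : ∀ (x₁ : W₁) (x₂ : W₂),
      ‖(x₁ : X)‖ ≤ (1 + γ) * ‖(x₁ : X) + (x₂ : X)‖ ∧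
      ‖(x₂ : X)‖ ≤ (1 + γ) * ‖(x₁ : X) + (x₂ : X)‖)
    (n₁ : W₁ → ℝ) (n₂ : W₂ → ℝ)
    (hn₁_add : ∀ x y, n₁ (x + y) ≤ n₁ x + n₁ y)
    (hn₁_smul : ∀ (t : ℝ) x, n₁ (t • x) = |t| * n₁ x)
    (hn₁_def : ∀ x, n₁ x = 0 → x = 0)
    (hn₂_add : ∀ x y, n₂ (x + y) ≤ n₂ x + n₂ y)
    (hn₂_smul : ∀ (t : ℝ) x, n₂ (t • x) = |t| * n₂ x)
    (hn₂_def : ∀ x, n₂ x = 0 → x = 0)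
    (hsand₁ : ∀ x : W₁, (1 / (1 + γ)) * n₁ x ≤ ‖(x : X)‖ ∧ ‖(x : X)‖ ≤ n₁ x)
    (hsand₂ : ∀ x : W₂, (1 / (1 + γ)) * n₂ x ≤ ‖(x : X)‖ ∧ ‖(x : X)‖ ≤ n₂ x) :
    let N : W₁ × W₂ → ℝ := fun p =>
      max (n₁ p.1) (max (n₂ p.2) ‖(p.1 : X) + (p.2 : X)‖)
    (∀ (x₁ : W₁) (x₂ : W₂), n₁ x₁ ≤ N (x₁, x₂) ∧ n₂ x₂ ≤ N (x₁, x₂)) ∧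
    (∀ x₁ : W₁, N (x₁, 0) = n₁ x₁) ∧
    (∀ x₂ : W₂, N (0, x₂) = n₂ x₂) ∧
    (∀ (x₁ : W₁) (x₂ : W₂),
      ‖(x₁ : X) + (x₂ : X)‖ ≤ N (x₁, x₂) ∧
      N (x₁, x₂) ≤ (1 + γ) ^ 2 * ‖(x₁ : X) + (x₂ : X)‖) :=
  stmt_16_general W₁ W₂ γ hγ hproj n₁ n₂ hsand₁ hsand₂
end

section
/- Let u₁ ∈ Y₁ and u₂ ∈ Y₂ be unit vectors in Euclidean subspaces of a normed space whose direct sum carries a norm invariant under orthogonal operators on each summand. Define f(a₁, a₂) = ‖|a₁|u₁ + |a₂|u₂‖ for (a₁,a₂) ∈ ℝ². Then f satisfies the triangle inequality: f(a₁+b₁, a₂+b₂) ≤ f(a₁,a₂) + f(b₁,b₂) for all (a₁,a₂),(b₁,b₂) ∈ ℝ². -/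
/-! Since `-id` is orthogonal, the absolute values in `f` can be dropped; then `f` is `N`
composed with the linear map `a ↦ (a₁ • u₁, a₂ • u₂)`, and subadditivity passes from `N`. -/

section SignInvariance

variable {E F α : Type*} [SeminormedAddCommGroup E] [NormedSpace ℝ E]
  [SeminormedAddCommGroup F] [NormedSpace ℝ F]

theorem exists_linearIsometryEquiv_abs_smul_eq (s : ℝ) :
    ∃ O : E ≃ₗᵢ[ℝ] E, ∀ z : E, |s| • z = O (s • z) := by
  rcases abs_choice s with h | h
  · exact ⟨.refl ℝ E, fun z => by rw [h]; rfl⟩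
  · exact ⟨.neg ℝ, fun z => by rw [h, neg_smul]; rfl⟩

theorem apply_abs_smul_prod_abs_smul_eq (N : E × F → α)
    (hinv : ∀ (O₁ : E ≃ₗᵢ[ℝ] E) (O₂ : F ≃ₗᵢ[ℝ] F) (x : E) (y : F), N (O₁ x, O₂ y) = N (x, y))
    (a b : ℝ) (x : E) (y : F) : N (|a| • x, |b| • y) = N (a • x, b • y) := by
  obtain ⟨O₁, hO₁⟩ := exists_linearIsometryEquiv_abs_smul_eq (E := E) a
  obtain ⟨O₂, hO₂⟩ := exists_linearIsometryEquiv_abs_smul_eq (E := F) b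
  rw [hO₁, hO₂, hinv]

end SignInvariance

theorem stmt_17_general
    {Y₁ Y₂ : Type*}
    [NormedAddCommGroup Y₁] [InnerProductSpace ℝ Y₁]
    [NormedAddCommGroup Y₂] [InnerProductSpace ℝ Y₂]
    (N : Y₁ × Y₂ → ℝ)
    (hN_add : ∀ p q, N (p + q) ≤ N p + N q)
    (hinv : ∀ (O₁ : Y₁ ≃ₗᵢ[ℝ] Y₁) (O₂ : Y₂ ≃ₗᵢ[ℝ] Y₂) (y₁ : Y₁) (y₂ : Y₂),
      N (O₁ y₁, O₂ y₂) = N (y₁, y₂))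
    (u₁ : Y₁) (u₂ : Y₂) :
    let f : ℝ × ℝ → ℝ := fun a => N (|a.1| • u₁, |a.2| • u₂)
    ∀ a b : ℝ × ℝ, f (a + b) ≤ f a + f b := by
  intro f a b
  simp only [f, Prod.fst_add, Prod.snd_add, apply_abs_smul_prod_abs_smul_eq N hinv, add_smul]
  exact hN_add (a.1 • u₁, a.2 • u₂) (b.1 • u₁, b.2 • u₂)

/-- The triangle inequality for the function f(a₁,a₂) = ‖|a₁|u₁ + |a₂|u₂‖ constructed
in the proof of Lemma `L:InvToUncond`. -/
theorem stmt_17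
    {Y₁ Y₂ : Type*}
    [NormedAddCommGroup Y₁] [InnerProductSpace ℝ Y₁] [FiniteDimensional ℝ Y₁]
    [NormedAddCommGroup Y₂] [InnerProductSpace ℝ Y₂] [FiniteDimensional ℝ Y₂]
    (N : Y₁ × Y₂ → ℝ)
    (hN_add : ∀ p q, N (p + q) ≤ N p + N q)
    (hN_smul : ∀ (t : ℝ) p, N (t • p) = |t| * N p)
    (hN_def : ∀ p, N p = 0 → p = 0)
    (hinv : ∀ (O₁ : Y₁ ≃ₗᵢ[ℝ] Y₁) (O₂ : Y₂ ≃ₗᵢ[ℝ] Y₂) (y₁ : Y₁) (y₂ : Y₂),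
      N (O₁ y₁, O₂ y₂) = N (y₁, y₂))
    (u₁ : Y₁) (u₂ : Y₂) (hu₁ : ‖u₁‖ = 1) (hu₂ : ‖u₂‖ = 1) :
    let f : ℝ × ℝ → ℝ := fun a => N (|a.1| • u₁, |a.2| • u₂)
    ∀ a b : ℝ × ℝ, f (a + b) ≤ f a + f b :=
  stmt_17_general N hN_add hinv u₁ u₂
end
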